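/- arXiv:1410.0898 — 6 statements merged into one kernel-verified Lean document; each statement's English description precedes it below -/
import Mathlib

section
/- Let (X, μ) be a standard probability space and let ρ be an admissible metric on it. Then every Borel set of the topology induced by ρ on X is measurable with respect to the completion of μ, and μ is inner regular with respect to ρ: for every μ-measurable set A, μ(A) = sup{ μ(K) : K ⊆ A, K compact in the metric ρ }. -/
open MeasureTheory Set
open scoped ENNReal

namespace VirtCont

variable {X Y : Type*}

/-- A semimetric on a set `S`. -/
def IsSemimetricOn (ρ : X → X → ℝ) (S : Set X) : Prop :=
  (∀ x ∈ S, ∀ y ∈ S, 0 ≤ ρ x y) ∧ (∀ x ∈ S, ρ x x = 0) ∧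
  (∀ x ∈ S, ∀ y ∈ S, ρ x y = ρ y x) ∧
  (∀ x ∈ S, ∀ y ∈ S, ∀ z ∈ S, ρ x z ≤ ρ x y + ρ y z)

/-- Separability of the semimetric space `(S, ρ)`. -/
def SepOn (ρ : X → X → ℝ) (S : Set X) : Prop :=
  ∃ D : Set X, D ⊆ S ∧ D.Countable ∧ ∀ x ∈ S, ∀ ε : ℝ, 0 < ε → ∃ d ∈ D, ρ x d < ε

/-- An admissible semimetric on `(S, μ|_S)`: a semimetric on `S`, measurable as a function
of two variables, for which some subset of `S` of full measure in `S` is separable. -/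
def IsAdmissibleSemimetricOn [MeasurableSpace X] (μ : Measure X) (S : Set X)
    (ρ : X → X → ℝ) : Prop :=
  IsSemimetricOn ρ S ∧
  Measurable (fun p : S × S => ρ (p.1 : X) (p.2 : X)) ∧
  ∃ X₀ : Set X, X₀ ⊆ S ∧ MeasurableSet X₀ ∧ μ (S \ X₀) = 0 ∧ SepOn ρ X₀

/-- An admissible semimetric on the whole space `(X, μ)`. -/
def IsAdmissibleSemimetric [MeasurableSpace X] (μ : Measure X) (ρ : X → X → ℝ) : Prop :=
  IsSemimetricOn ρ univ ∧
  Measurable (fun p : X × X => ρ p.1 p.2) ∧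
  ∃ X₀ : Set X, MeasurableSet X₀ ∧ μ X₀ = 1 ∧ SepOn ρ X₀

/-- An admissible metric on `(X, μ)`. -/
def IsAdmissibleMetric [MeasurableSpace X] (μ : Measure X) (ρ : X → X → ℝ) : Prop :=
  IsAdmissibleSemimetric μ ρ ∧ ∀ x y : X, ρ x y = 0 → x = y

/-- Continuity of `f` on `A ×ˢ B` with respect to the product of the (semi)metric
topologies of `ρX` and `ρY`. -/
def ContOnProd (ρX : X → X → ℝ) (ρY : Y → Y → ℝ) (A : Set X) (B : Set Y)
    (f : X × Y → ℝ) : Prop :=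
  ∀ x ∈ A, ∀ y ∈ B, ∀ ε : ℝ, 0 < ε → ∃ δ : ℝ, 0 < δ ∧
    ∀ x' ∈ A, ∀ y' ∈ B, ρX x x' < δ → ρY y y' < δ → |f (x, y) - f (x', y')| < ε

variable [MeasurableSpace X] [MeasurableSpace Y]

/-- A properly virtually continuous function of two variables. -/
def ProperlyVirtuallyContinuous (μ : Measure X) (ν : Measure Y) (f : X × Y → ℝ) : Prop :=
  Measurable f ∧
  ∀ ε : ℝ, 0 < ε → ∃ (X' : Set X) (Y' : Set Y),
    MeasurableSet X' ∧ MeasurableSet Y' ∧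
    1 - ENNReal.ofReal ε ≤ μ X' ∧ 1 - ENNReal.ofReal ε ≤ ν Y' ∧
    ∃ ρX : X → X → ℝ, ∃ ρY : Y → Y → ℝ,
      IsAdmissibleSemimetricOn μ X' ρX ∧ IsAdmissibleSemimetricOn ν Y' ρY ∧
      ContOnProd ρX ρY X' Y' f

/-- A virtually continuous function: one which agrees almost everywhere with a
properly virtually continuous function. -/
def VirtuallyContinuous (μ : Measure X) (ν : Measure Y) (f : X × Y → ℝ) : Prop :=
  Measurable f ∧ ∃ g : X × Y → ℝ,
    ProperlyVirtuallyContinuous μ ν g ∧ f =ᵐ[μ.prod ν] g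

/-- A virtually open subset of a product of measure spaces. -/
def VirtuallyOpen (μ : Measure X) (ν : Measure Y) (Z : Set (X × Y)) : Prop :=
  ∃ (X' : Set X) (Y' : Set Y), MeasurableSet X' ∧ MeasurableSet Y' ∧
    μ X' = 1 ∧ ν Y' = 1 ∧
    ∃ (A : ℕ → Set X) (B : ℕ → Set Y),
      (∀ n, MeasurableSet (A n)) ∧ (∀ n, MeasurableSet (B n)) ∧
      Z ∩ (X' ×ˢ Y') = ⋃ n, (A n) ×ˢ (B n)

/-- A virtually closed subset of a product of measure spaces. -/
def VirtuallyClosed (μ : Measure X) (ν : Measure Y) (Z : Set (X × Y)) : Prop :=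
  VirtuallyOpen μ ν Zᶜ

/-- Proper thickness of a subset of a product of measure spaces. -/
noncomputable def sthi (μ : Measure X) (ν : Measure Y) (Z : Set (X × Y)) : ℝ≥0∞ :=
  ⨅ (A : Set X) (B : Set Y) (_ : MeasurableSet A) (_ : MeasurableSet B)
    (_ : Z ⊆ (A ×ˢ (univ : Set Y)) ∪ ((univ : Set X) ×ˢ B)), μ A + ν B

/-- Thickness of a subset of a product of measure spaces. -/
noncomputable def thi (μ : Measure X) (ν : Measure Y) (Z : Set (X × Y)) : ℝ≥0∞ :=
  ⨅ (A : Set X) (B : Set Y) (_ : MeasurableSet A) (_ : MeasurableSet B)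
    (_ : (μ.prod ν) (Z \ ((A ×ˢ (univ : Set Y)) ∪ ((univ : Set X) ×ˢ B))) = 0), μ A + ν B

/-- The distance `τ` between two measurable functions on a product space. -/
noncomputable def tauDist (μ : Measure X) (ν : Measure Y) (f g : X × Y → ℝ) : ℝ :=
  sInf {ε : ℝ | 0 < ε ∧ thi μ ν {p : X × Y | ε < |f p - g p|} ≤ ENNReal.ofReal ε}

/-- The `SR¹`-norm of a measurable function on a product space. -/
noncomputable def srNorm (μ : Measure X) (ν : Measure Y) (f : X × Y → ℝ) : ℝ≥0∞ :=
  ⨅ (a : X → ℝ) (b : Y → ℝ) (_ : Measurable a) (_ : Measurable b)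
    (_ : ∀ x, 0 ≤ a x) (_ : ∀ y, 0 ≤ b y)
    (_ : ∀ᵐ p ∂μ.prod ν, |f p| ≤ a p.1 + b p.2),
    (∫⁻ x, ENNReal.ofReal (a x) ∂μ) + (∫⁻ y, ENNReal.ofReal (b y) ∂ν)


/-- The topology on `X` generated by the open balls of the (semi)metric `ρ`. -/
def semimetricTopology (ρ : X → X → ℝ) : TopologicalSpace X :=
  TopologicalSpace.generateFrom {U : Set X | ∃ (x : X) (r : ℝ), U = {y : X | ρ x y < r}}


private lemma ball_subset_of_isOpen (ρ : X → X → ℝ)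
    (htri : ∀ x y z : X, ρ x z ≤ ρ x y + ρ y z)
    {U : Set X} (hU : @IsOpen X (semimetricTopology ρ) U) {y : X} (hy : y ∈ U) :
    ∃ r : ℝ, 0 < r ∧ {z | ρ y z < r} ⊆ U := by
  have hU' : TopologicalSpace.GenerateOpen
      {U : Set X | ∃ (x : X) (r : ℝ), U = {y : X | ρ x y < r}} U := hU
  clear hU
  induction hU' with
  | basic V hV =>
    obtain ⟨x, r, rfl⟩ := hV
    have hy' : ρ x y < r := hy
    refine ⟨r - ρ x y, by linarith, fun z hz => ?_⟩
    have h1 : ρ y z < r - ρ x y := hz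
    have h2 : ρ x z ≤ ρ x y + ρ y z := htri x y z
    show ρ x z < r
    linarith
  | univ => exact ⟨1, one_pos, fun _ _ => trivial⟩
  | inter U V _ _ ihU ihV =>
    obtain ⟨r₁, hr₁, h₁⟩ := ihU hy.1
    obtain ⟨r₂, hr₂, h₂⟩ := ihV hy.2
    refine ⟨min r₁ r₂, lt_min hr₁ hr₂, fun z hz => ?_⟩
    have hz' : ρ y z < min r₁ r₂ := hz
    exact ⟨h₁ (show ρ y z < r₁ from lt_of_lt_of_le hz' (min_le_left _ _)),
      h₂ (show ρ y z < r₂ from lt_of_lt_of_le hz' (min_le_right _ _))⟩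
  | sUnion S _ ih =>
    obtain ⟨t, htS, hyt⟩ := hy
    obtain ⟨r, hr, h⟩ := ih t htS hyt
    exact ⟨r, hr, fun z hz => ⟨t, htS, h hz⟩⟩

/-- A finite Borel measure on a Polish space is tight. -/
private lemma exists_compact_compl_le {α : Type*} [TopologicalSpace α] [PolishSpace α]
    [MeasurableSpace α] [BorelSpace α] (μ : Measure α) [IsFiniteMeasure μ]
    {ε : ℝ≥0∞} (hε : ε ≠ 0) :
    ∃ K : Set α, IsCompact K ∧ μ Kᶜ ≤ ε := by
  letI := TopologicalSpace.upgradeIsCompletelyMetrizable α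
  rcases isEmpty_or_nonempty α with hemp | hne
  · refine ⟨∅, isCompact_empty, ?_⟩
    have h0 : ((∅ : Set α)ᶜ : Set α) = ∅ := by
      ext x; exact (IsEmpty.false x).elim
    simp [h0]
  obtain ⟨u, hu⟩ := TopologicalSpace.exists_dense_seq α
  obtain ⟨δ, hδpos, hδsum⟩ := ENNReal.exists_pos_sum_of_countable hε ℕ
  set B : ℕ → ℕ → Set α :=
    fun k N => ⋃ n ∈ Finset.range N, Metric.closedBall (u n) (1 / (k + 1)) with hB
  have hball : ∀ k N : ℕ, MeasurableSet (B k N) := fun k N =>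
    (Finset.range N).measurableSet_biUnion fun n _ => Metric.isClosed_closedBall.measurableSet
  have hmem : ∀ (k : ℕ) (x : α), ∃ N, x ∈ B k N := by
    intro k x
    obtain ⟨n, hn⟩ := hu.exists_dist_lt x (show (0:ℝ) < 1 / (k + 1) by positivity)
    exact ⟨n + 1, Set.mem_biUnion (Finset.self_mem_range_succ n) (Metric.mem_closedBall.2 hn.le)⟩
  have hsub : ∀ k : ℕ, ∀ {N M : ℕ}, N ≤ M → B k N ⊆ B k M := by
    intro k N M h x hx
    simp only [hB, Set.mem_iUnion, Finset.mem_range, exists_prop] at hx ⊢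
    obtain ⟨n, hn, hxn⟩ := hx
    exact ⟨n, lt_of_lt_of_le hn h, hxn⟩
  have key : ∀ k : ℕ, ∃ N, μ (B k N)ᶜ < δ k := by
    intro k
    have hempty : ⋂ N, (B k N)ᶜ = ∅ := by
      ext x
      simp only [Set.mem_iInter, Set.mem_compl_iff, Set.mem_empty_iff_false, iff_false,
        not_forall, not_not]
      exact hmem k x
    have htend := tendsto_measure_iInter_atTop
      (fun N => ((hball k N).compl).nullMeasurableSet)
      (fun N M h => Set.compl_subset_compl.2 (hsub k h)) ⟨0, measure_ne_top μ _⟩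
    rw [show ⋂ N, ((fun N => (B k N)ᶜ) N) = ∅ from hempty, measure_empty] at htend
    exact ((tendsto_order.1 htend).2 _ (ENNReal.coe_pos.2 (hδpos k))).exists
  choose N hN using key
  refine ⟨⋂ k, B k (N k), ?_, ?_⟩
  · refine TotallyBounded.isCompact_of_isClosed ?_
      (isClosed_iInter fun k =>
        (Finset.range (N k)).finite_toSet.isClosed_biUnion fun n _ => Metric.isClosed_closedBall)
    rw [Metric.totallyBounded_iff]
    intro r hr
    obtain ⟨k, hk⟩ := exists_nat_one_div_lt hr
    refine ⟨u '' ↑(Finset.range (N k)), ((Finset.range (N k)).finite_toSet).image u, ?_⟩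
    intro x hx
    have hxk : x ∈ B k (N k) := Set.mem_iInter.1 hx k
    simp only [hB, Set.mem_iUnion, exists_prop] at hxk
    obtain ⟨n, hn, hxn⟩ := hxk
    exact Set.mem_biUnion (Set.mem_image_of_mem u hn)
      (Metric.mem_ball.2 (lt_of_le_of_lt (Metric.mem_closedBall.1 hxn) hk))
  · have hcompl : (⋂ k, B k (N k))ᶜ = ⋃ k, (B k (N k))ᶜ := by
      simp [Set.compl_iInter]
    rw [hcompl]
    calc μ (⋃ k, (B k (N k))ᶜ) ≤ ∑' k, μ (B k (N k))ᶜ := measure_iUnion_le _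
      _ ≤ ∑' k, (δ k : ℝ≥0∞) := ENNReal.tsum_le_tsum fun k => (hN k).le
      _ ≤ ε := hδsum.le

/-- For an admissible metric `ρ` on a standard probability space `(X, μ)`,
every Borel set of the topology induced by `ρ` is measurable with respect to the completion
of `μ` (i.e. is null-measurable), and `μ` is inner regular with respect to `ρ`-compact sets. -/
theorem borel_measurable_and_inner_regular_of_admissible
    [StandardBorelSpace X] (μ : Measure X) [IsProbabilityMeasure μ] [NullSingletonClass μ]
    (ρ : X → X → ℝ) (hρ : IsAdmissibleMetric μ ρ) :
    (∀ B : Set X, MeasurableSet[@borel X (semimetricTopology ρ)] B →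
      NullMeasurableSet B μ) ∧
    (∀ A : Set X, MeasurableSet A →
      μ A = ⨆ (K : Set X) (_ : K ⊆ A) (_ : @IsCompact X (semimetricTopology ρ) K), μ K) := by
  classical
  obtain ⟨⟨hsm, hmeas, X₀, hX₀m, hX₀1, D, hDX₀, hDc, hDd⟩, _hmet⟩ := hρ
  have htri : ∀ x y z : X, ρ x z ≤ ρ x y + ρ y z := fun x y z =>
    hsm.2.2.2 x (mem_univ x) y (mem_univ y) z (mem_univ z)
  have hsym : ∀ x y : X, ρ x y = ρ y x := fun x y =>
    hsm.2.2.1 x (mem_univ x) y (mem_univ y)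
  have hX₀c : μ X₀ᶜ = 0 := (prob_compl_eq_zero_iff hX₀m).2 hX₀1
  have hX₀ne : X₀.Nonempty :=
    nonempty_of_measure_ne_zero (by rw [hX₀1]; exact one_ne_zero)
  have hDne : D.Nonempty := by
    obtain ⟨x, hx⟩ := hX₀ne
    obtain ⟨e, he, -⟩ := hDd x hx 1 one_pos
    exact ⟨e, he⟩
  obtain ⟨d, rfl⟩ := hDc.exists_eq_range hDne
  set U : ℕ × ℕ → Set X := fun i => {y | ρ (d i.1) y < 1 / (i.2 + 1)} with hUdef
  have hUm : ∀ i, MeasurableSet (U i) := fun i =>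
    measurableSet_lt (hmeas.comp measurable_prodMk_left) measurable_const
  have hbasis : ∀ y ∈ X₀, ∀ O : Set X, @IsOpen X (semimetricTopology ρ) O → y ∈ O →
      ∃ i, y ∈ U i ∧ U i ⊆ O := by
    intro y hy O hO hyO
    obtain ⟨r, hr, hball⟩ := ball_subset_of_isOpen ρ htri hO hyO
    obtain ⟨k, hk⟩ := exists_nat_one_div_lt (show (0:ℝ) < r / 2 by linarith)
    obtain ⟨e, he, hde⟩ := hDd y hy (1 / (k + 1)) (by positivity)
    obtain ⟨n, rfl⟩ := he
    refine ⟨(n, k), ?_, fun z hz => hball ?_⟩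
    · show ρ (d n) y < 1 / ((k : ℝ) + 1)
      rw [hsym]; exact hde
    · have hz' : ρ (d n) z < 1 / ((k : ℝ) + 1) := hz
      have h1 : ρ y z ≤ ρ y (d n) + ρ (d n) z := htri _ _ _
      show ρ y z < r
      linarith
  have hOpenNull : ∀ O : Set X, @IsOpen X (semimetricTopology ρ) O → NullMeasurableSet O μ := by
    intro O hO
    set V := ⋃ (i : ℕ × ℕ) (_ : U i ⊆ O), U i with hVdef
    have hVm : MeasurableSet V :=
      MeasurableSet.iUnion fun i => MeasurableSet.iUnion fun _ => hUm i
    have hVO : V ⊆ O := Set.iUnion₂_subset fun i hi => hi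
    have hOV : O \ V ⊆ X₀ᶜ := by
      intro y hy
      by_contra hyX₀
      rw [Set.notMem_compl_iff] at hyX₀
      obtain ⟨i, hyi, hiO⟩ := hbasis y hyX₀ O hO hy.1
      exact hy.2 (Set.mem_iUnion₂.2 ⟨i, hiO, hyi⟩)
    refine hVm.nullMeasurableSet.congr ?_
    rw [MeasureTheory.ae_eq_set]
    constructor
    · rw [Set.diff_eq_empty.2 hVO]; exact measure_empty
    · exact measure_mono_null hOV hX₀c
  constructor
  · intro B hB
    let m : MeasurableSpace X :=
      { MeasurableSet' := fun s => NullMeasurableSet s μ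
        measurableSet_empty := MeasurableSet.empty.nullMeasurableSet
        measurableSet_compl := fun s hs => hs.compl
        measurableSet_iUnion := fun f hf => NullMeasurableSet.iUnion hf }
    have hle : @borel X (semimetricTopology ρ) ≤ m :=
      MeasurableSpace.generateFrom_le fun t ht => hOpenNull t ht
    exact hle _ hB
  · intro A hA
    letI := upgradeStandardBorel X
    refine le_antisymm ?_
      (iSup_le fun K => iSup_le fun hK => iSup_le fun _ => measure_mono hK)
    -- inner regularity w.r.t. compact sets of the Polish topology
    have hinner : ∀ S : Set X, MeasurableSet S → ∀ ε : ℝ≥0∞, ε ≠ 0 →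
        ∃ K, K ⊆ S ∧ IsCompact K ∧ μ (S \ K) ≤ ε := by
      intro S hS ε hε
      have hε2 : ε / 2 ≠ 0 := (ENNReal.half_pos hε).ne'
      obtain ⟨F, hFS, hFc, hF⟩ := hS.exists_isClosed_diff_lt (measure_ne_top μ S) hε2
      obtain ⟨K₀, hK₀c, hK₀⟩ := exists_compact_compl_le μ hε2
      refine ⟨F ∩ K₀, Set.inter_subset_left.trans hFS, hK₀c.inter_left hFc, ?_⟩
      have hsplit : S \ (F ∩ K₀) ⊆ (S \ F) ∪ K₀ᶜ := by
        intro x hx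
        by_cases hxF : x ∈ F
        · by_cases hxK : x ∈ K₀
          · exact absurd ⟨hxF, hxK⟩ hx.2
          · exact Or.inr hxK
        · exact Or.inl ⟨hx.1, hxF⟩
      calc μ (S \ (F ∩ K₀)) ≤ μ ((S \ F) ∪ K₀ᶜ) := measure_mono hsplit
        _ ≤ μ (S \ F) + μ K₀ᶜ := measure_union_le _ _
        _ ≤ ε / 2 + ε / 2 := add_le_add hF.le hK₀
        _ = ε := ENNReal.add_halves ε
    -- the key construction: big compact sets on which `id` is continuous into the ρ-topology
    have hC : ∀ ε : ℝ≥0∞, ε ≠ 0 → ∃ C : Set X, C ⊆ X₀ ∧ IsCompact C ∧ MeasurableSet C ∧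
        μ Cᶜ ≤ ε ∧ ∀ O : Set X, @IsOpen X (semimetricTopology ρ) O → ∀ y ∈ C ∩ O,
          ∃ u : Set X, IsOpen u ∧ y ∈ u ∧ u ∩ C ⊆ O := by
      intro ε hε
      have hε2 : ε / 2 ≠ 0 := (ENNReal.half_pos hε).ne'
      have hε4 : ε / 2 / 2 ≠ 0 := (ENNReal.half_pos hε2).ne'
      obtain ⟨K₀, hK₀X₀, hK₀c, hK₀μ⟩ := hinner X₀ hX₀m (ε / 2) hε2
      obtain ⟨δ, hδpos, hδsum⟩ := ENNReal.exists_pos_sum_of_countable hε4 (ℕ × ℕ)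
      have hδne : ∀ i : ℕ × ℕ, (δ i : ℝ≥0∞) ≠ 0 := fun i =>
        (ENNReal.coe_pos.2 (hδpos i)).ne'
      choose C1 hC1sub hC1c hC1μ using fun i : ℕ × ℕ => hinner (U i) (hUm i) (δ i) (hδne i)
      choose C2 hC2sub hC2c hC2μ using fun i : ℕ × ℕ =>
        hinner (U i)ᶜ (hUm i).compl (δ i) (hδne i)
      set C : Set X := K₀ ∩ ⋂ i, (C1 i ∪ C2 i) with hCdef
      have hCcl : IsClosed (⋂ i, (C1 i ∪ C2 i)) :=
        isClosed_iInter fun i => (hC1c i).isClosed.union (hC2c i).isClosed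
      have hCc : IsCompact C := hK₀c.inter_right hCcl
      refine ⟨C, Set.inter_subset_left.trans hK₀X₀, hCc, hCc.isClosed.measurableSet, ?_, ?_⟩
      · have hsplit : Cᶜ ⊆ K₀ᶜ ∪ ⋃ i, (C1 i ∪ C2 i)ᶜ := by
          intro x hx
          by_cases hxK : x ∈ K₀
          · refine Or.inr ?_
            by_contra hxI
            simp only [Set.mem_iUnion, Set.mem_compl_iff, not_exists, not_not] at hxI
            exact hx ⟨hxK, Set.mem_iInter.2 hxI⟩
          · exact Or.inl hxK
        have hK₀compl : μ K₀ᶜ ≤ ε / 2 := by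
          have : K₀ᶜ ⊆ (X₀ \ K₀) ∪ X₀ᶜ := by
            intro x hx
            by_cases hxX : x ∈ X₀
            · exact Or.inl ⟨hxX, hx⟩
            · exact Or.inr hxX
          calc μ K₀ᶜ ≤ μ ((X₀ \ K₀) ∪ X₀ᶜ) := measure_mono this
            _ ≤ μ (X₀ \ K₀) + μ X₀ᶜ := measure_union_le _ _
            _ ≤ ε / 2 + 0 := add_le_add hK₀μ hX₀c.le
            _ = ε / 2 := add_zero _
        have hiμ : ∀ i : ℕ × ℕ, μ (C1 i ∪ C2 i)ᶜ ≤ (δ i : ℝ≥0∞) + (δ i : ℝ≥0∞) := by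
          intro i
          have hsub : (C1 i ∪ C2 i)ᶜ ⊆ (U i \ C1 i) ∪ ((U i)ᶜ \ C2 i) := by
            intro x hx
            rw [Set.mem_compl_iff, Set.mem_union] at hx
            push_neg at hx
            by_cases hxU : x ∈ U i
            · exact Or.inl ⟨hxU, hx.1⟩
            · exact Or.inr ⟨hxU, hx.2⟩
          calc μ (C1 i ∪ C2 i)ᶜ ≤ μ ((U i \ C1 i) ∪ ((U i)ᶜ \ C2 i)) := measure_mono hsub
            _ ≤ μ (U i \ C1 i) + μ ((U i)ᶜ \ C2 i) := measure_union_le _ _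
            _ ≤ (δ i : ℝ≥0∞) + (δ i : ℝ≥0∞) := add_le_add (hC1μ i) (hC2μ i)
        calc μ Cᶜ ≤ μ (K₀ᶜ ∪ ⋃ i, (C1 i ∪ C2 i)ᶜ) := measure_mono hsplit
          _ ≤ μ K₀ᶜ + μ (⋃ i, (C1 i ∪ C2 i)ᶜ) := measure_union_le _ _
          _ ≤ ε / 2 + ∑' i, μ (C1 i ∪ C2 i)ᶜ := add_le_add hK₀compl (measure_iUnion_le _)
          _ ≤ ε / 2 + ∑' i : ℕ × ℕ, ((δ i : ℝ≥0∞) + (δ i : ℝ≥0∞)) :=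
              add_le_add le_rfl (ENNReal.tsum_le_tsum hiμ)
          _ = ε / 2 + ((∑' i : ℕ × ℕ, (δ i : ℝ≥0∞)) + ∑' i : ℕ × ℕ, (δ i : ℝ≥0∞)) := by
              rw [ENNReal.tsum_add]
          _ ≤ ε / 2 + (ε / 2 / 2 + ε / 2 / 2) :=
              add_le_add le_rfl (add_le_add hδsum.le hδsum.le)
          _ = ε := by rw [ENNReal.add_halves, ENNReal.add_halves]
      · intro O hO y hy
        have hyX₀ : y ∈ X₀ := hK₀X₀ hy.1.1
        obtain ⟨i, hyi, hiO⟩ := hbasis y hyX₀ O hO hy.2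
        refine ⟨(C2 i)ᶜ, (hC2c i).isClosed.isOpen_compl, fun h => (hC2sub i h) hyi, ?_⟩
        intro z hz
        have hzC : z ∈ C1 i ∪ C2 i := Set.mem_iInter.1 hz.2.2 i
        rcases hzC with hz1 | hz2
        · exact hiO (hC1sub i hz1)
        · exact absurd hz2 hz.1
    -- conclude
    refine ENNReal.le_of_forall_pos_le_add fun r hr _ => ?_
    have hr2 : ((r : ℝ≥0∞) / 2) ≠ 0 := by
      refine (ENNReal.half_pos ?_).ne'
      exact_mod_cast hr.ne'
    obtain ⟨C, hCX₀, hCc, hCm, hCμ, hCopen⟩ := hC ((r : ℝ≥0∞) / 2) hr2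
    obtain ⟨K, hKAC, hKc, hKμ⟩ := hinner (A ∩ C) (hA.inter hCm) ((r : ℝ≥0∞) / 2) hr2
    have hKA : K ⊆ A := fun x hx => (hKAC hx).1
    have hKC : K ⊆ C := fun x hx => (hKAC hx).2
    have hKρ : @IsCompact X (semimetricTopology ρ) K := by
      have hcont : @ContinuousOn X X _ (semimetricTopology ρ) id K := by
        rw [@continuousOn_iff X X _ (semimetricTopology ρ) id K]
        intro y hy O hO hyO
        obtain ⟨u, hu, hyu, huC⟩ := hCopen O hO y ⟨hKC hy, hyO⟩
        exact ⟨u, hu, hyu, fun z hz => huC ⟨hz.1, hKC hz.2⟩⟩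
      have himg := @IsCompact.image_of_continuousOn X X _ (semimetricTopology ρ) _ _ hKc hcont
      rwa [Set.image_id] at himg
    have hsup : μ K ≤ ⨆ (K' : Set X) (_ : K' ⊆ A)
        (_ : @IsCompact X (semimetricTopology ρ) K'), μ K' :=
      le_iSup_of_le K (le_iSup_of_le hKA (le_iSup_of_le hKρ le_rfl))
    have h1 : μ A ≤ μ K + (r : ℝ≥0∞) := by
      have hA1 : A ⊆ (A ∩ C) ∪ Cᶜ := by
        intro x hx
        by_cases hxC : x ∈ C
        · exact Or.inl ⟨hx, hxC⟩
        · exact Or.inr hxC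
      have hA2 : A ∩ C ⊆ K ∪ ((A ∩ C) \ K) := by
        intro x hx
        by_cases hxK : x ∈ K
        · exact Or.inl hxK
        · exact Or.inr ⟨hx, hxK⟩
      calc μ A ≤ μ ((A ∩ C) ∪ Cᶜ) := measure_mono hA1
        _ ≤ μ (A ∩ C) + μ Cᶜ := measure_union_le _ _
        _ ≤ (μ K + μ ((A ∩ C) \ K)) + μ Cᶜ :=
            add_le_add (le_trans (measure_mono hA2) (measure_union_le _ _)) le_rfl
        _ ≤ (μ K + (r : ℝ≥0∞) / 2) + (r : ℝ≥0∞) / 2 :=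
            add_le_add (add_le_add le_rfl hKμ) hCμ
        _ = μ K + (r : ℝ≥0∞) := by rw [add_assoc, ENNReal.add_halves]
    exact le_trans h1 (add_le_add_left hsup _)

end VirtCont
end

section
/- Let ρ₁ and ρ₂ be admissible semimetrics on a standard probability space (X, μ), and suppose that ρ₁ is a metric. Then for every ε > 0 there exists a measurable set K ⊆ X with μ(K) > 1 − ε such that the function ρ₂ : K × K → ℝ is continuous with respect to the product of the topologies induced by ρ₁ on K. -/
open MeasureTheory Set
open scoped ENNReal

namespace VirtCont

variable {X Y : Type*}

variable [MeasurableSpace X] [MeasurableSpace Y]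

lemma lusin_aux {α : Type*} [MetricSpace α] [MeasurableSpace α] [BorelSpace α]
    (ν : Measure α) [IsFiniteMeasure ν] (g : α → ℝ) (hg : Measurable g)
    {ε : ℝ≥0∞} (hε : ε ≠ 0) :
    ∃ K : Set α, MeasurableSet K ∧ ν Kᶜ ≤ ε ∧
      ∀ x ∈ K, ∀ r : ℝ, 0 < r → ∃ δ : ℝ, 0 < δ ∧
        ∀ y ∈ K, dist x y < δ → |g x - g y| < r := by
  obtain ⟨ε', hε'pos, hε'sum⟩ := ENNReal.exists_pos_sum_of_countable' hε (ℚ × ℚ)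
  set A : ℚ × ℚ → Set α := fun p => g ⁻¹' Ioo (p.1 : ℝ) (p.2 : ℝ) with hA_def
  have hA : ∀ p : ℚ × ℚ, MeasurableSet (A p) := fun p => hg measurableSet_Ioo
  have hU : ∀ p : ℚ × ℚ, ∃ U, U ⊇ A p ∧ IsOpen U ∧ ν (U \ A p) < ε' p := by
    intro p
    obtain ⟨U, h1, h2, _, h4⟩ :=
      (hA p).exists_isOpen_diff_lt (measure_ne_top ν _) (hε'pos p).ne'
    exact ⟨U, h1, h2, h4⟩
  choose U hUsub hUopen hUlt using hU
  refine ⟨(⋃ p : ℚ × ℚ, (U p \ A p))ᶜ, ?_, ?_, ?_⟩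
  · exact (MeasurableSet.iUnion fun p => (hUopen p).measurableSet.diff (hA p)).compl
  · rw [compl_compl]
    exact le_trans (measure_iUnion_le _)
      (le_trans (ENNReal.tsum_le_tsum fun p => (hUlt p).le) hε'sum.le)
  · intro x hx r hr
    obtain ⟨a, ha1, ha2⟩ := exists_rat_btwn (show g x - r / 2 < g x by linarith)
    obtain ⟨b, hb1, hb2⟩ := exists_rat_btwn (show g x < g x + r / 2 by linarith)
    have hxA : x ∈ A (a, b) := ⟨ha2, hb1⟩
    obtain ⟨δ, hδpos, hδball⟩ := Metric.isOpen_iff.1 (hUopen (a, b)) x (hUsub (a, b) hxA)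
    refine ⟨δ, hδpos, fun y hy hdist => ?_⟩
    have hyU : y ∈ U (a, b) := hδball (by rwa [Metric.mem_ball, dist_comm])
    have hyA : y ∈ A (a, b) := by
      by_contra hcon
      exact hy (mem_iUnion.2 ⟨(a, b), hyU, hcon⟩)
    obtain ⟨hya, hyb⟩ := hyA
    rw [abs_lt]
    constructor <;> simp only at hya hyb <;> linarith

/-- Lusin's theorem with respect to the topology of a measurable metric `d` on a
standard Borel space with countable `d`-dense sequence `e`. -/
lemma lusin_on_metric {α : Type*} [MeasurableSpace α] [StandardBorelSpace α]
    (ν : Measure α) [IsFiniteMeasure ν]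
    (d : α → α → ℝ) (hdmeas : Measurable fun p : α × α => d p.1 p.2)
    (hself : ∀ x, d x x = 0) (hsymm : ∀ x y, d x y = d y x)
    (htri : ∀ x y z, d x z ≤ d x y + d y z) (hmetric : ∀ x y, d x y = 0 → x = y)
    (e : ℕ → α) (hdense : ∀ x, ∀ r : ℝ, 0 < r → ∃ n, d x (e n) < r)
    (g : α → ℝ) (hg : Measurable g) {ε : ℝ≥0∞} (hε : ε ≠ 0) :
    ∃ K : Set α, MeasurableSet K ∧ ν Kᶜ ≤ ε ∧
      ∀ x ∈ K, ∀ r : ℝ, 0 < r → ∃ δ : ℝ, 0 < δ ∧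
        ∀ y ∈ K, d x y < δ → |g x - g y| < r := by
  have hnonneg : ∀ x y, 0 ≤ d x y := by
    intro x y
    have h1 := htri x y x
    rw [hself x, hsymm y x] at h1
    linarith
  letI mα : MetricSpace α :=
    { dist := d
      dist_self := hself
      dist_comm := hsymm
      dist_triangle := fun x y z => htri x y z
      eq_of_dist_eq_zero := fun h => hmetric _ _ h }
  -- open sets are measurable
  have hmeas_ball : ∀ (n : ℕ) (q : ℚ), MeasurableSet {y | d (e n) y < (q : ℝ)} := by
    intro n q
    have hm : Measurable fun y => d (e n) y :=
      hdmeas.comp (measurable_const.prodMk measurable_id)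
    exact hm measurableSet_Iio
  have hborel_le : borel α ≤ ‹MeasurableSpace α› := by
    refine MeasurableSpace.generateFrom_le ?_
    intro u hu
    have hu' : IsOpen u := hu
    set T : Set (ℕ × ℚ) := {nq | 0 < (nq.2 : ℝ) ∧ {y | d (e nq.1) y < (nq.2 : ℝ)} ⊆ u} with hT
    have huT : u = ⋃ nq ∈ T, {y | d (e nq.1) y < (nq.2 : ℝ)} := by
      ext z
      constructor
      · intro hz
        obtain ⟨δ, hδpos, hδball⟩ := Metric.isOpen_iff.1 hu' z hz
        obtain ⟨n, hn⟩ := hdense z (δ / 3) (by linarith)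
        obtain ⟨q, hq1, hq2⟩ := exists_rat_btwn (show δ / 3 < δ / 2 by linarith)
        refine mem_biUnion (show (n, q) ∈ T from ⟨(show (0:ℝ) < δ/3 by linarith).trans hq1, ?_⟩) ?_
        · intro y hy
          refine hδball ?_
          have : d z y ≤ d z (e n) + d (e n) y := htri z (e n) y
          have hy' : d (e n) y < (q : ℝ) := hy
          simp only [Metric.mem_ball]
          show d y z < δ
          rw [hsymm y z]
          calc d z y ≤ d z (e n) + d (e n) y := htri z (e n) y
            _ < δ / 3 + δ / 2 := by exact add_lt_add (hn) (lt_trans hy' hq2)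
            _ < δ := by linarith
        · show d (e n) z < (q : ℝ)
          rw [hsymm (e n) z]
          exact lt_trans hn hq1
      · intro hz
        obtain ⟨nq, hnqT, hznq⟩ := mem_iUnion₂.1 hz
        exact hnqT.2 hznq
    rw [huT]
    exact MeasurableSet.biUnion (Set.to_countable T) fun nq _ => hmeas_ball nq.1 nq.2
  have hle_borel : ‹MeasurableSpace α› ≤ borel α := by
    set F : α → (ℕ → ℝ) := fun x n => d x (e n) with hF
    have hFmeas : Measurable F :=
      measurable_pi_lambda _ fun n => hdmeas.comp (measurable_id.prodMk measurable_const)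
    have hFinj : Function.Injective F := by
      intro x y hxy
      have hzero : d x y ≤ 0 := by
        by_contra hcon
        push_neg at hcon
        obtain ⟨n, hn⟩ := hdense x (d x y / 2) (by linarith)
        have h1 : d y (e n) = d x (e n) := by
          have := congrFun hxy n
          simp only [hF] at this
          exact this.symm
        have : d x y ≤ d x (e n) + d (e n) y := htri x (e n) y
        rw [hsymm (e n) y, h1] at this
        linarith
      exact hmetric _ _ (le_antisymm hzero (hnonneg x y))
    have hFcont : Continuous F := by
      refine continuous_pi fun n => Metric.continuous_iff.2 fun b r hr => ⟨r, hr, fun a hab => ?_⟩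
      rw [Real.dist_eq, abs_lt]
      have h1 : d a (e n) ≤ d a b + d b (e n) := htri a b (e n)
      have h2 : d b (e n) ≤ d b a + d a (e n) := htri b a (e n)
      have h3 : d b a = d a b := hsymm b a
      have h4 : dist a b < r := hab
      have h5 : d a b < r := h4
      constructor <;> linarith
    have hFemb : MeasurableEmbedding F := hFmeas.measurableEmbedding hFinj
    intro s hs
    have himg : MeasurableSet (F '' s) := hFemb.measurableSet_image.2 hs
    have himg' : MeasurableSet[borel (ℕ → ℝ)] (F '' s) := by
      rwa [← BorelSpace.measurable_eq (α := ℕ → ℝ)]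
    have hpre := hFcont.borel_measurable himg'
    rwa [hFinj.preimage_image] at hpre
  haveI : BorelSpace α := ⟨le_antisymm hle_borel hborel_le⟩
  exact lusin_aux ν g hg hε

/-- if `ρ₁`, `ρ₂` are admissible semimetrics on a standard probability space
`(X, μ)` and `ρ₁` is a metric, then for every `ε > 0` there is a measurable set `K` with
`μ(K) > 1 − ε` on which `ρ₂` (as a function of two variables) is continuous with respect
to the product of the topologies induced by `ρ₁`. -/
theorem continuity_of_semimetric_on_large_set
    [StandardBorelSpace X] (μ : Measure X) [IsProbabilityMeasure μ] [NullSingletonClass μ]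
    (ρ₁ ρ₂ : X → X → ℝ)
    (h₁ : IsAdmissibleSemimetric μ ρ₁) (h₂ : IsAdmissibleSemimetric μ ρ₂)
    (h₁metric : ∀ x y : X, ρ₁ x y = 0 → x = y)
    (ε : ℝ) (hε : 0 < ε) :
    ∃ K : Set X, MeasurableSet K ∧ 1 - ENNReal.ofReal ε < μ K ∧
      ContOnProd ρ₁ ρ₁ K K (fun p : X × X => ρ₂ p.1 p.2) := by
  obtain ⟨hsem₁, hmeas₁, X₁, hX₁m, hX₁μ, D₁, hD₁sub, hD₁ct, hD₁dense⟩ := h₁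
  obtain ⟨hsem₂, hmeas₂, X₂, hX₂m, hX₂μ, D₂, hD₂sub, hD₂ct, hD₂dense⟩ := h₂
  -- basic facts about the two semimetrics
  have self₁ : ∀ x, ρ₁ x x = 0 := fun x => hsem₁.2.1 x (mem_univ x)
  have symm₁ : ∀ x y, ρ₁ x y = ρ₁ y x := fun x y =>
    hsem₁.2.2.1 x (mem_univ x) y (mem_univ y)
  have tri₁ : ∀ x y z, ρ₁ x z ≤ ρ₁ x y + ρ₁ y z := fun x y z =>
    hsem₁.2.2.2 x (mem_univ x) y (mem_univ y) z (mem_univ z)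
  have symm₂ : ∀ x y, ρ₂ x y = ρ₂ y x := fun x y =>
    hsem₂.2.2.1 x (mem_univ x) y (mem_univ y)
  have tri₂ : ∀ x y z, ρ₂ x z ≤ ρ₂ x y + ρ₂ y z := fun x y z =>
    hsem₂.2.2.2 x (mem_univ x) y (mem_univ y) z (mem_univ z)
  -- enumerations of the dense sets
  have hX₁ne : X₁.Nonempty := nonempty_of_measure_ne_zero (by rw [hX₁μ]; exact one_ne_zero)
  have hX₂ne : X₂.Nonempty := nonempty_of_measure_ne_zero (by rw [hX₂μ]; exact one_ne_zero)
  obtain ⟨x₀, hx₀⟩ := hX₁ne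
  obtain ⟨d₀, hd₀, -⟩ := hD₁dense x₀ hx₀ 1 one_pos
  obtain ⟨e₁, hrange₁⟩ := hD₁ct.exists_eq_range ⟨d₀, hd₀⟩
  obtain ⟨y₀, hy₀⟩ := hX₂ne
  obtain ⟨d₀', hd₀', -⟩ := hD₂dense y₀ hy₀ 1 one_pos
  obtain ⟨e₂, hrange₂⟩ := hD₂ct.exists_eq_range ⟨d₀', hd₀'⟩
  -- set up the subtype α := X₁
  haveI : StandardBorelSpace ↥X₁ := hX₁m.standardBorel
  have hemb : MeasurableEmbedding (Subtype.val : ↥X₁ → X) :=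
    MeasurableEmbedding.subtype_coe hX₁m
  set ν : Measure ↥X₁ := μ.comap Subtype.val with hν
  have hνapp : ∀ s : Set ↥X₁, ν s = μ (Subtype.val '' s) := fun s => hemb.comap_apply μ s
  haveI : IsFiniteMeasure ν := by
    constructor
    rw [hνapp, Subtype.coe_image_univ, hX₁μ]
    exact ENNReal.one_lt_top
  -- the metric data on the subtype
  set d : ↥X₁ → ↥X₁ → ℝ := fun a b => ρ₁ (a : X) (b : X) with hd
  have hdmeas : Measurable fun p : ↥X₁ × ↥X₁ => d p.1 p.2 :=
    hmeas₁.comp ((measurable_subtype_coe.comp measurable_fst).prodMk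
      (measurable_subtype_coe.comp measurable_snd))
  have he₁mem : ∀ n, e₁ n ∈ X₁ := fun n => hD₁sub (by rw [hrange₁]; exact mem_range_self n)
  set e : ℕ → ↥X₁ := fun n => ⟨e₁ n, he₁mem n⟩ with he
  have hdense : ∀ x : ↥X₁, ∀ r : ℝ, 0 < r → ∃ n, d x (e n) < r := by
    intro x r hr
    obtain ⟨dd, hddD, hdd⟩ := hD₁dense (x : X) x.2 r hr
    rw [hrange₁] at hddD
    obtain ⟨n, rfl⟩ := hddD
    exact ⟨n, hdd⟩
  -- budget
  have hεt0 : min (ENNReal.ofReal ε) (1 / 2) ≠ 0 :=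
    ne_of_gt (lt_min (ENNReal.ofReal_pos.2 hε) (by norm_num))
  obtain ⟨ε', hε'pos, hε'sum⟩ := ENNReal.exists_pos_sum_of_countable' hεt0 ℕ
  -- Lusin for each one-variable function
  have hlusin : ∀ m : ℕ, ∃ K : Set ↥X₁, MeasurableSet K ∧ ν Kᶜ ≤ ε' m ∧
      ∀ x ∈ K, ∀ r : ℝ, 0 < r → ∃ δ : ℝ, 0 < δ ∧
        ∀ y ∈ K, d x y < δ → |ρ₂ (x : X) (e₂ m) - ρ₂ (y : X) (e₂ m)| < r := by
    intro m
    exact lusin_on_metric ν d hdmeas (fun x => self₁ x) (fun x y => symm₁ x y)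
      (fun x y z => tri₁ x y z)
      (fun x y h => Subtype.ext (h₁metric _ _ h)) e hdense
      (fun a => ρ₂ (a : X) (e₂ m))
      (hmeas₂.comp (measurable_subtype_coe.prodMk measurable_const)) (hε'pos m).ne'
  choose K hKm hKν hKcont using hlusin
  -- the final set
  set Kfin : Set X := X₂ ∩ ⋂ m, (Subtype.val '' K m) with hKfin
  have hKfinm : MeasurableSet Kfin :=
    hX₂m.inter (MeasurableSet.iInter fun m => hemb.measurableSet_image' (hKm m))
  -- measure estimate
  have hX₁c : μ X₁ᶜ = 0 := by
    rw [measure_compl hX₁m (measure_ne_top μ _), hX₁μ, measure_univ, tsub_self]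
  have hX₂c : μ X₂ᶜ = 0 := by
    rw [measure_compl hX₂m (measure_ne_top μ _), hX₂μ, measure_univ, tsub_self]
  have hsub : Kfinᶜ ⊆ X₂ᶜ ∪ (X₁ᶜ ∪ ⋃ m, (Subtype.val '' (K m)ᶜ)) := by
    intro z hz
    by_cases hz2 : z ∈ X₂
    · by_cases hz1 : z ∈ X₁
      · right; right
        have : z ∉ ⋂ m, (Subtype.val '' K m) := fun hmem => hz ⟨hz2, hmem⟩
        rw [mem_iInter] at this
        push_neg at this
        obtain ⟨m, hm⟩ := this
        refine mem_iUnion.2 ⟨m, ⟨⟨z, hz1⟩, fun hc => hm ⟨⟨z, hz1⟩, hc, rfl⟩, rfl⟩⟩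
      · right; left; exact hz1
    · left; exact hz2
  have hKc' : μ Kfinᶜ < min (ENNReal.ofReal ε) (1 / 2) := by
    calc μ Kfinᶜ ≤ μ X₂ᶜ + (μ X₁ᶜ + μ (⋃ m, (Subtype.val '' (K m)ᶜ))) := by
          refine le_trans (measure_mono hsub) ?_
          refine le_trans (measure_union_le _ _) ?_
          exact add_le_add le_rfl (measure_union_le _ _)
      _ = μ (⋃ m, (Subtype.val '' (K m)ᶜ)) := by rw [hX₁c, hX₂c, zero_add, zero_add]
      _ ≤ ∑' m, μ (Subtype.val '' (K m)ᶜ) := measure_iUnion_le _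
      _ = ∑' m, ν (K m)ᶜ := by
          refine tsum_congr fun m => ?_
          rw [hνapp]
      _ ≤ ∑' m, ε' m := ENNReal.tsum_le_tsum fun m => hKν m
      _ < min (ENNReal.ofReal ε) (1 / 2) := hε'sum
  refine ⟨Kfin, hKfinm, ?_, ?_⟩
  · -- measure bound
    have htot : μ Kfin + μ Kfinᶜ = 1 := by
      rw [measure_add_measure_compl hKfinm, measure_univ]
    rcases le_or_gt (ENNReal.ofReal ε) 1 with hle | hlt
    · rw [ENNReal.sub_lt_iff_lt_right ENNReal.ofReal_ne_top hle]
      calc (1 : ℝ≥0∞) = μ Kfin + μ Kfinᶜ := htot.symm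
        _ < μ Kfin + ENNReal.ofReal ε :=
          ENNReal.add_lt_add_left (measure_ne_top μ _)
            (lt_of_lt_of_le hKc' (min_le_left _ _))
    · have h0 : (1 : ℝ≥0∞) - ENNReal.ofReal ε = 0 := tsub_eq_zero_of_le hlt.le
      rw [h0]
      have h2 : μ Kfinᶜ < 1 :=
        lt_of_lt_of_le (lt_of_lt_of_le hKc' (min_le_right _ _)) (by norm_num)
      refine pos_iff_ne_zero.2 fun hzero => ?_
      rw [hzero, zero_add] at htot
      exact h2.ne htot
  · -- continuity
    intro x hx y hy r hr
    obtain ⟨dx, hdxD, hdx⟩ := hD₂dense x hx.1 (r / 8) (by linarith)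
    rw [hrange₂] at hdxD
    obtain ⟨m, rfl⟩ := hdxD
    obtain ⟨dy, hdyD, hdy⟩ := hD₂dense y hy.1 (r / 8) (by linarith)
    rw [hrange₂] at hdyD
    obtain ⟨k, rfl⟩ := hdyD
    obtain ⟨xt, hxtK, hxtval⟩ := mem_iInter.1 hx.2 m
    obtain ⟨yt, hytK, hytval⟩ := mem_iInter.1 hy.2 k
    obtain ⟨δ₁, hδ₁, hδ₁cont⟩ := hKcont m xt hxtK (r / 8) (by linarith)
    obtain ⟨δ₂, hδ₂, hδ₂cont⟩ := hKcont k yt hytK (r / 8) (by linarith)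
    refine ⟨min δ₁ δ₂, lt_min hδ₁ hδ₂, ?_⟩
    intro x' hx' y' hy' h1 h2
    obtain ⟨xt', hxt'K, hxt'val⟩ := mem_iInter.1 hx'.2 m
    obtain ⟨yt', hyt'K, hyt'val⟩ := mem_iInter.1 hy'.2 k
    have e1 : |ρ₂ (xt : X) (e₂ m) - ρ₂ (xt' : X) (e₂ m)| < r / 8 := by
      refine hδ₁cont xt' hxt'K ?_
      show ρ₁ (xt : X) (xt' : X) < δ₁
      rw [hxtval, hxt'val]
      exact lt_of_lt_of_le h1 (min_le_left _ _)
    have e2 : |ρ₂ (yt : X) (e₂ k) - ρ₂ (yt' : X) (e₂ k)| < r / 8 := by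
      refine hδ₂cont yt' hyt'K ?_
      show ρ₁ (yt : X) (yt' : X) < δ₂
      rw [hytval, hyt'val]
      exact lt_of_lt_of_le h2 (min_le_right _ _)
    rw [hxtval, hxt'val] at e1
    rw [hytval, hyt'val] at e2
    rw [abs_lt] at e1 e2
    have hxx' : ρ₂ x x' < r * 3 / 8 := by
      have t1 : ρ₂ x x' ≤ ρ₂ x (e₂ m) + ρ₂ (e₂ m) x' := tri₂ _ _ _
      have t2 : ρ₂ (e₂ m) x' = ρ₂ x' (e₂ m) := symm₂ _ _
      linarith [e1.1, e1.2]
    have hyy' : ρ₂ y y' < r * 3 / 8 := by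
      have t1 : ρ₂ y y' ≤ ρ₂ y (e₂ k) + ρ₂ (e₂ k) y' := tri₂ _ _ _
      have t2 : ρ₂ (e₂ k) y' = ρ₂ y' (e₂ k) := symm₂ _ _
      linarith [e2.1, e2.2]
    simp only
    rw [abs_lt]
    have u1 : ρ₂ x y ≤ ρ₂ x x' + ρ₂ x' y' + ρ₂ y' y := by
      have v1 : ρ₂ x y ≤ ρ₂ x x' + ρ₂ x' y := tri₂ _ _ _
      have v2 : ρ₂ x' y ≤ ρ₂ x' y' + ρ₂ y' y := tri₂ _ _ _
      linarith
    have u2 : ρ₂ x' y' ≤ ρ₂ x' x + ρ₂ x y + ρ₂ y y' := by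
      have v1 : ρ₂ x' y' ≤ ρ₂ x' y + ρ₂ y y' := tri₂ _ _ _
      have v2 : ρ₂ x' y ≤ ρ₂ x' x + ρ₂ x y := tri₂ _ _ _
      linarith
    have s1 : ρ₂ x' x = ρ₂ x x' := symm₂ _ _
    have s2 : ρ₂ y' y = ρ₂ y y' := symm₂ _ _
    constructor <;> linarith

end VirtCont
end

section
/- (Generalized Luzin theorem.) Let ρ be an admissible metric on a standard probability space (X, μ), let (M, d) be a Polish space, and let f : X → M be a measurable map. Then for every ε > 0 there exists a measurable set K ⊆ X with μ(K) > 1 − ε such that the restriction of f to K is continuous as a map from (K, ρ) to (M, d). -/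
open MeasureTheory Set
open scoped ENNReal

namespace VirtCont

variable {X Y : Type*}

variable [MeasurableSpace X] [MeasurableSpace Y]

/-- generalized Luzin theorem: if `ρ` is an admissible metric on a standard
probability space `(X, μ)`, `(M, d)` a Polish space and `f : X → M` measurable, then for
every `ε > 0` there is a measurable `K` with `μ(K) > 1 − ε` on which `f` is continuous
as a map from `(K, ρ)` to `(M, d)`. -/
theorem generalized_luzin
    [StandardBorelSpace X] (μ : Measure X) [IsProbabilityMeasure μ] [NullSingletonClass μ]
    (ρ : X → X → ℝ) (hρ : IsAdmissibleMetric μ ρ)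
    {M : Type*} [MetricSpace M] [CompleteSpace M] [SecondCountableTopology M]
    [MeasurableSpace M] [BorelSpace M]
    (f : X → M) (hf : Measurable f) (ε : ℝ) (hε : 0 < ε) :
    ∃ K : Set X, MeasurableSet K ∧ 1 - ENNReal.ofReal ε < μ K ∧
      ∀ x ∈ K, ∀ δ : ℝ, 0 < δ → ∃ η : ℝ, 0 < η ∧
        ∀ y ∈ K, ρ x y < η → dist (f x) (f y) < δ := by
  classical
  obtain ⟨⟨hsemi, hmeas2, X₀, hX₀m, hX₀1, hsep⟩, hmetric⟩ := hρ
  obtain ⟨D, hDsub, hDcount, hDdense⟩ := hsep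
  obtain ⟨hnonneg, hself, hcomm, htri⟩ := hsemi
  -- metric space structure on the subtype `X₀`
  letI : MetricSpace X₀ :=
    { dist := fun a b => ρ a b
      dist_self := fun a => hself a (mem_univ _)
      dist_comm := fun a b => hcomm a (mem_univ _) b (mem_univ _)
      dist_triangle := fun a b c =>
        htri a (mem_univ _) b (mem_univ _) c (mem_univ _)
      eq_of_dist_eq_zero := fun h => Subtype.ext (hmetric _ _ h) }
  -- separability
  set D' : Set X₀ := Subtype.val ⁻¹' D with hD'
  have hD'c : D'.Countable := hDcount.preimage Subtype.val_injective
  have hD'dense : Dense D' := by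
    rw [Metric.dense_iff]
    intro x r hr
    obtain ⟨d, hd, hlt⟩ := hDdense x.val x.prop r hr
    exact ⟨⟨d, hDsub hd⟩, by
      rw [Metric.mem_ball]; exact (show ρ (⟨d, hDsub hd⟩ : X₀).val x.val < r by
        rw [← hcomm x.val (mem_univ _) d (mem_univ _)]; exact hlt), hd⟩
  haveI : TopologicalSpace.SeparableSpace X₀ := ⟨⟨D', hD'c, hD'dense⟩⟩
  haveI : SecondCountableTopology X₀ := UniformSpace.secondCountable_of_separable ↥X₀
  -- balls are measurable for the subtype σ-algebra
  have hballmeas : ∀ (d : X₀) (r : ℝ), MeasurableSet (Metric.ball d r) := by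
    intro d r
    have h1 : Measurable (fun b : X₀ => ρ (b : X) (d : X)) :=
      hmeas2.comp (measurable_subtype_coe.prodMk measurable_const)
    have h2 : Metric.ball d r = (fun b : X₀ => ρ (b : X) (d : X)) ⁻¹' Iio r := rfl
    rw [h2]
    exact h1 measurableSet_Iio
  -- open sets are measurable
  have hopen : ∀ s : Set X₀, IsOpen s → MeasurableSet s := by
    intro s hs
    set T : Set (X₀ × ℚ) := {p | p.1 ∈ D' ∧ Metric.ball p.1 (p.2 : ℝ) ⊆ s} with hT
    have hTc : T.Countable :=
      ((hD'c.prod (countable_univ (α := ℚ))).mono (by intro p hp; exact ⟨hp.1, mem_univ _⟩))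
    have hsT : s = ⋃ p ∈ T, Metric.ball p.1 (p.2 : ℝ) := by
      ext x
      constructor
      · intro hx
        obtain ⟨r, hr, hball⟩ := Metric.isOpen_iff.1 hs x hx
        obtain ⟨d, hd, hlt⟩ := hDdense x.val x.prop (r / 2) (by linarith)
        obtain ⟨q, hq1, hq2⟩ := exists_rat_btwn hlt
        have hxd : dist x (⟨d, hDsub hd⟩ : X₀) < (q : ℝ) := hq1
        have hdx : dist (⟨d, hDsub hd⟩ : X₀) x < (q : ℝ) := by
          rwa [dist_comm]
        refine mem_biUnion (show ((⟨d, hDsub hd⟩ : X₀), q) ∈ T from ⟨hd, ?_⟩) ?_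
        · intro y hy
          apply hball
          have h1 : dist y (⟨d, hDsub hd⟩ : X₀) < (q : ℝ) := hy
          have h2 : dist y x ≤ dist y (⟨d, hDsub hd⟩ : X₀) + dist (⟨d, hDsub hd⟩ : X₀) x :=
            dist_triangle _ _ _
          have h3 : dist y x < r := by linarith
          exact Metric.mem_ball.2 h3
        · exact hxd
      · intro hx
        obtain ⟨p, hp, hxp⟩ := mem_iUnion₂.1 hx
        exact hp.2 hxp
    rw [hsT]
    exact MeasurableSet.biUnion hTc fun p _ => hballmeas p.1 p.2
  haveI : OpensMeasurableSpace X₀ := ⟨MeasurableSpace.generateFrom_le fun s hs => hopen s hs⟩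
  haveI : StandardBorelSpace X₀ := hX₀m.standardBorel
  -- the Borel σ-algebra of the metric topology is countably separated
  have hCS : @MeasurableSpace.CountablySeparated ↥X₀ (borel ↥X₀) := by
    rw [@MeasurableSpace.countablySeparated_def ↥X₀ (borel ↥X₀)]
    constructor
    refine ⟨(fun p : X₀ × ℚ => Metric.ball p.1 (p.2 : ℝ)) '' (D' ×ˢ univ), ?_, ?_, ?_⟩
    · exact (hD'c.prod (countable_univ (α := ℚ))).image _
    · rintro t ⟨p, -, rfl⟩
      have hopn : IsOpen ((fun p : X₀ × ℚ => Metric.ball p.1 (p.2 : ℝ)) p) :=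
        Metric.isOpen_ball
      exact MeasurableSpace.measurableSet_generateFrom hopn
    · rintro x - y - hxy
      by_contra hne
      have hr : 0 < dist x y := dist_pos.2 hne
      obtain ⟨d, hd, hlt⟩ := hDdense x.val x.prop (dist x y / 2) (by linarith)
      obtain ⟨q, hq1, hq2⟩ := exists_rat_btwn hlt
      have hmemx : x ∈ Metric.ball (⟨d, hDsub hd⟩ : X₀) (q : ℝ) := by
        show dist x (⟨d, hDsub hd⟩ : X₀) < (q : ℝ)
        exact hq1
      have hmemy : y ∉ Metric.ball (⟨d, hDsub hd⟩ : X₀) (q : ℝ) := by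
        intro hy
        have h1 : dist y (⟨d, hDsub hd⟩ : X₀) < (q : ℝ) := hy
        have h2 : dist x y ≤ dist x (⟨d, hDsub hd⟩ : X₀) + dist (⟨d, hDsub hd⟩ : X₀) y :=
          dist_triangle _ _ _
        rw [dist_comm (⟨d, hDsub hd⟩ : X₀) y] at h2
        have hq1' : dist x (⟨d, hDsub hd⟩ : X₀) < (q : ℝ) := hq1
        linarith
      exact hmemy ((hxy _ ⟨(⟨d, hDsub hd⟩, q), ⟨hd, mem_univ _⟩, rfl⟩).1 hmemx)
  -- Lusin–Souslin: the subtype σ-algebra equals the Borel σ-algebra of the metric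
  have hble : borel ↥X₀ ≤ (inferInstance : MeasurableSpace ↥X₀) :=
    OpensMeasurableSpace.borel_le
  have hmeas_id : @Measurable ↥X₀ ↥X₀ _ (borel ↥X₀) id := fun t ht => hble _ ht
  have hemb := @Measurable.measurableEmbedding ↥X₀ ↥X₀ (borel ↥X₀) id hCS _ _
    hmeas_id Function.injective_id
  have hle2 : ∀ s : Set X₀, MeasurableSet s → @MeasurableSet _ (borel X₀) s := by
    intro s hs
    have := @MeasurableEmbedding.measurableSet_image' ↥X₀ ↥X₀ _ (borel ↥X₀) id hemb s hs
    rwa [image_id] at this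
  have hBorelEq : (inferInstance : MeasurableSpace X₀) = borel X₀ := by
    apply le_antisymm
    · exact fun s hs => hle2 s hs
    · exact OpensMeasurableSpace.borel_le
  haveI : BorelSpace X₀ := ⟨hBorelEq⟩
  -- the comap measure
  have hemb₀ : MeasurableEmbedding (Subtype.val : X₀ → X) :=
    MeasurableEmbedding.subtype_coe hX₀m
  set ν : Measure X₀ := μ.comap Subtype.val with hνdef
  have hνs : ∀ s : Set X₀, ν s = μ (Subtype.val '' s) := fun s => hemb₀.comap_apply μ s
  haveI : IsProbabilityMeasure ν := ⟨by
    rw [hνs, image_univ, Subtype.range_coe]; exact hX₀1⟩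
  -- M is nonempty
  haveI hXne : Nonempty X := by
    rcases isEmpty_or_nonempty X with h | h
    · exfalso
      have h1 : μ univ = 1 := measure_univ
      rw [univ_eq_empty_iff.2 h, measure_empty] at h1
      exact zero_ne_one h1
    · exact h
  haveI : Nonempty M := ⟨f (Classical.arbitrary X)⟩
  set e : ℕ → M := TopologicalSpace.denseSeq M with he'
  have he : DenseRange e := TopologicalSpace.denseRange_denseSeq M
  -- constants
  set c : ℝ := min ε 1 with hc
  have hc0 : 0 < c := lt_min hε one_pos
  have hc1 : c ≤ 1 := min_le_right _ _
  set a : ℝ≥0∞ := ENNReal.ofReal c / 2 with ha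
  have ha0 : a ≠ 0 := by
    simp only [ha, ne_eq, ENNReal.div_eq_zero_iff, ENNReal.ofReal_eq_zero, not_or]
    exact ⟨by linarith, by norm_num⟩
  -- the basic sets
  set V : ℕ → Set M := fun k =>
    Metric.ball (e (Nat.unpair k).1) (1 / ((Nat.unpair k).2 + 1)) with hV
  set E : ℕ → Set X₀ := fun k => (fun b : X₀ => f (b : X)) ⁻¹' V k with hE
  have hEmeas : ∀ k, MeasurableSet (E k) := fun k =>
    (hf.comp measurable_subtype_coe) Metric.isOpen_ball.measurableSet
  -- choose open approximations
  have hUex : ∀ k : ℕ, ∃ U : Set X₀, E k ⊆ U ∧ IsOpen U ∧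
      ν (U \ E k) < a / 2 * 2⁻¹ ^ k := by
    intro k
    have hek : (a / 2 * 2⁻¹ ^ k : ℝ≥0∞) ≠ 0 := by
      apply mul_ne_zero
      · simp only [ne_eq, ENNReal.div_eq_zero_iff, not_or]
        exact ⟨ha0, by norm_num⟩
      · exact pow_ne_zero _ (by norm_num)
    obtain ⟨U, hEU, hUo, hlt⟩ := (E k).exists_isOpen_lt_add (measure_ne_top ν _) hek
    exact ⟨U, hEU, hUo,
      measure_diff_lt_of_lt_add (hEmeas k).nullMeasurableSet hEU (measure_ne_top _ _) hlt⟩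
  choose U hEU hUopen hUsmall using hUex
  set B : Set X₀ := ⋃ k, U k \ E k with hB
  have hBmeas : MeasurableSet B :=
    MeasurableSet.iUnion fun k => ((hUopen k).measurableSet).diff (hEmeas k)
  have hBle : ν B ≤ a := by
    calc ν B ≤ ∑' k, ν (U k \ E k) := measure_iUnion_le _
      _ ≤ ∑' k : ℕ, a / 2 * 2⁻¹ ^ k := ENNReal.tsum_le_tsum fun k => (hUsmall k).le
      _ = a / 2 * (1 - 2⁻¹)⁻¹ := by rw [ENNReal.tsum_mul_left, ENNReal.tsum_geometric]
      _ = a := by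
          rw [ENNReal.one_sub_inv_two, inv_inv]
          exact ENNReal.div_mul_cancel (by norm_num) (by norm_num)
  have hνB_lt : ν B < ENNReal.ofReal c := by
    refine lt_of_le_of_lt hBle ?_
    exact ENNReal.half_lt_self (by simpa using hc0) ENNReal.ofReal_ne_top
  refine ⟨Subtype.val '' Bᶜ, hemb₀.measurableSet_image' hBmeas.compl, ?_, ?_⟩
  · -- measure estimate
    have hμK : μ (Subtype.val '' Bᶜ) = 1 - ν B := by
      rw [← hνs, prob_compl_eq_one_sub hBmeas]
    rw [hμK]
    have h1 : ENNReal.ofReal c ≤ 1 := ENNReal.ofReal_le_one.2 hc1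
    have h2 : 1 - ENNReal.ofReal ε ≤ 1 - ENNReal.ofReal c :=
      tsub_le_tsub_left (ENNReal.ofReal_le_ofReal (min_le_left _ _)) 1
    refine lt_of_le_of_lt h2 ?_
    rw [lt_tsub_iff_right]
    calc (1 - ENNReal.ofReal c) + ν B < (1 - ENNReal.ofReal c) + ENNReal.ofReal c := by
          apply ENNReal.add_lt_add_left _ hνB_lt
          exact ne_top_of_le_ne_top ENNReal.one_ne_top tsub_le_self
      _ = 1 := tsub_add_cancel_of_le h1
  · -- continuity
    rintro x ⟨b, hbB, rfl⟩ δ hδ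
    obtain ⟨m0, hm0⟩ := exists_nat_gt (2 / δ)
    have hm : 2 / ((m0 : ℝ) + 1) < δ := by
      have h1 : (2 : ℝ) / δ < (m0 : ℝ) + 1 := hm0.trans (lt_add_one _)
      rw [div_lt_iff₀ hδ] at h1
      rw [div_lt_iff₀ (by positivity)]
      linarith
    have hr : (0 : ℝ) < 1 / ((m0 : ℝ) + 1) := by positivity
    obtain ⟨n, hn⟩ := he.exists_dist_lt (f (b : X)) hr
    set k := Nat.pair n m0 with hk
    have hVk : V k = Metric.ball (e n) (1 / ((m0 : ℝ) + 1)) := by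
      simp [hV, hk, Nat.unpair_pair]
    have hbE : b ∈ E k := by
      show f (b : X) ∈ V k
      rw [hVk]
      exact Metric.mem_ball.2 hn
    obtain ⟨η, hη0, hηsub⟩ := Metric.isOpen_iff.1 (hUopen k) b (hEU k hbE)
    refine ⟨η, hη0, ?_⟩
    rintro y ⟨b', hb'B, rfl⟩ hρ'
    have hb'U : b' ∈ U k := by
      apply hηsub
      show dist b' b < η
      show ρ (b' : X) (b : X) < η
      rw [hcomm (b' : X) (mem_univ _) (b : X) (mem_univ _)]
      exact hρ'
    have hb'E : b' ∈ E k := by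
      by_contra h
      exact hb'B (mem_iUnion.2 ⟨k, hb'U, h⟩)
    have hfb' : f (b' : X) ∈ Metric.ball (e n) (1 / ((m0 : ℝ) + 1)) := by
      have : f (b' : X) ∈ V k := hb'E
      rwa [hVk] at this
    have h1 : dist (f (b' : X)) (e n) < 1 / ((m0 : ℝ) + 1) := Metric.mem_ball.1 hfb'
    have h2 : dist (f (b : X)) (f (b' : X)) ≤
        dist (f (b : X)) (e n) + dist (e n) (f (b' : X)) := dist_triangle _ _ _
    rw [dist_comm (e n) (f (b' : X))] at h2
    calc dist (f (b : X)) (f (b' : X)) ≤ _ := h2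
      _ < 1 / ((m0 : ℝ) + 1) + 1 / ((m0 : ℝ) + 1) := by
          apply add_lt_add hn h1
      _ ≤ 2 / ((m0 : ℝ) + 1) := by ring_nf; rfl
      _ < δ := hm

end VirtCont
end

section
/- Let (X, μ) and (Y, ν) be standard probability spaces and let f, g : X × Y → ℝ be properly virtually continuous functions that coincide μ×ν-almost everywhere on X × Y. Then there exist measurable sets X' ⊆ X, Y' ⊆ Y of full measure such that f(x, y) = g(x, y) for all points x ∈ X', y ∈ Y'. -/
open MeasureTheory Set
open scoped ENNReal

namespace VirtCont

variable {X Y : Type*}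

variable [MeasurableSpace X] [MeasurableSpace Y]

lemma sepOn_of_forall_eps {ρ : X → X → ℝ} {S : Set X}
    (h : ∀ ε : ℝ, 0 < ε → ∃ D : Set X, D ⊆ S ∧ D.Countable ∧ ∀ x ∈ S, ∃ d ∈ D, ρ x d < ε) :
    SepOn ρ S := by
  choose D hDS hDc hD using fun n : ℕ => h (1/(n+1)) (by positivity)
  refine ⟨⋃ n, D n, Set.iUnion_subset hDS, Set.countable_iUnion hDc, fun x hx ε hε => ?_⟩
  obtain ⟨n, hn⟩ := exists_nat_one_div_lt hε
  obtain ⟨d, hd, hdlt⟩ := hD n x hx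
  exact ⟨d, Set.mem_iUnion.2 ⟨n, hd⟩, hdlt.trans hn⟩

lemma sepOn_mono {ρ : X → X → ℝ} {S T : Set X} (hST : S ⊆ T)
    (hsym : ∀ x ∈ T, ∀ y ∈ T, ρ x y = ρ y x)
    (htri : ∀ x ∈ T, ∀ y ∈ T, ∀ z ∈ T, ρ x z ≤ ρ x y + ρ y z)
    (h : SepOn ρ T) : SepOn ρ S := by
  classical
  apply sepOn_of_forall_eps
  intro ε hε
  obtain ⟨D, hDT, hDc, hD⟩ := h
  refine ⟨⋃ d ∈ D, if hd : ∃ s ∈ S, ρ s d < ε/2 then {hd.choose} else ∅, ?_, ?_, ?_⟩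
  · refine Set.iUnion₂_subset fun d hd => ?_
    split_ifs with hex
    · simpa using hex.choose_spec.1
    · simp
  · exact hDc.biUnion fun d _ => by split_ifs <;> simp
  · intro x hx
    obtain ⟨d, hd, hlt⟩ := hD x (hST hx) (ε/2) (by linarith)
    have hex : ∃ s ∈ S, ρ s d < ε/2 := ⟨x, hx, hlt⟩
    obtain ⟨hsS, hslt⟩ := hex.choose_spec
    refine ⟨hex.choose, Set.mem_biUnion hd (by rw [dif_pos hex]; simp), ?_⟩
    have h1 : ρ x hex.choose ≤ ρ x d + ρ d hex.choose :=
      htri x (hST hx) d (hDT hd) hex.choose (hST hsS)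
    have h2 : ρ d hex.choose = ρ hex.choose d := hsym d (hDT hd) _ (hST hsS)
    linarith

lemma sepOn_add {ρ₁ ρ₂ : X → X → ℝ} {S : Set X}
    (hsym₁ : ∀ x ∈ S, ∀ y ∈ S, ρ₁ x y = ρ₁ y x)
    (htri₁ : ∀ x ∈ S, ∀ y ∈ S, ∀ z ∈ S, ρ₁ x z ≤ ρ₁ x y + ρ₁ y z)
    (hsym₂ : ∀ x ∈ S, ∀ y ∈ S, ρ₂ x y = ρ₂ y x)
    (htri₂ : ∀ x ∈ S, ∀ y ∈ S, ∀ z ∈ S, ρ₂ x z ≤ ρ₂ x y + ρ₂ y z)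
    (h₁ : SepOn ρ₁ S) (h₂ : SepOn ρ₂ S) :
    SepOn (fun x y => ρ₁ x y + ρ₂ x y) S := by
  classical
  apply sepOn_of_forall_eps
  intro ε hε
  obtain ⟨D₁, hD₁S, hD₁c, hD₁⟩ := h₁
  obtain ⟨D₂, hD₂S, hD₂c, hD₂⟩ := h₂
  refine ⟨⋃ d₁ ∈ D₁, ⋃ d₂ ∈ D₂,
      if hd : ∃ s ∈ S, ρ₁ s d₁ < ε/4 ∧ ρ₂ s d₂ < ε/4 then {hd.choose} else ∅, ?_, ?_, ?_⟩
  · refine Set.iUnion₂_subset fun d₁ hd₁ => Set.iUnion₂_subset fun d₂ hd₂ => ?_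
    split_ifs with hex
    · simpa using hex.choose_spec.1
    · simp
  · exact hD₁c.biUnion fun d₁ _ => hD₂c.biUnion fun d₂ _ => by split_ifs <;> simp
  · intro x hx
    obtain ⟨d₁, hd₁, hlt₁⟩ := hD₁ x hx (ε/4) (by linarith)
    obtain ⟨d₂, hd₂, hlt₂⟩ := hD₂ x hx (ε/4) (by linarith)
    have hex : ∃ s ∈ S, ρ₁ s d₁ < ε/4 ∧ ρ₂ s d₂ < ε/4 := ⟨x, hx, hlt₁, hlt₂⟩
    obtain ⟨hsS, hs₁, hs₂⟩ := hex.choose_spec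
    refine ⟨hex.choose, ?_, ?_⟩
    · exact Set.mem_biUnion hd₁ (Set.mem_biUnion hd₂ (by rw [dif_pos hex]; simp))
    · have t1 : ρ₁ x hex.choose ≤ ρ₁ x d₁ + ρ₁ d₁ hex.choose :=
        htri₁ x hx d₁ (hD₁S hd₁) _ hsS
      have s1 : ρ₁ d₁ hex.choose = ρ₁ hex.choose d₁ := hsym₁ d₁ (hD₁S hd₁) _ hsS
      have t2 : ρ₂ x hex.choose ≤ ρ₂ x d₂ + ρ₂ d₂ hex.choose :=
        htri₂ x hx d₂ (hD₂S hd₂) _ hsS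
      have s2 : ρ₂ d₂ hex.choose = ρ₂ hex.choose d₂ := hsym₂ d₂ (hD₂S hd₂) _ hsS
      show ρ₁ x hex.choose + ρ₂ x hex.choose < ε
      linarith

lemma ball_meas [MeasurableSpace X] {S : Set X} (hS : MeasurableSet S) {φ : X → ℝ}
    (hφ : Measurable fun p : S => φ (p : X)) (r : ℝ) :
    MeasurableSet {x' | x' ∈ S ∧ φ x' < r} := by
  have heq : {x' | x' ∈ S ∧ φ x' < r} = Subtype.val '' {p : S | φ (p : X) < r} := by
    ext x'
    constructor
    · rintro ⟨h1, h2⟩; exact ⟨⟨x', h1⟩, h2, rfl⟩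
    · rintro ⟨p, hp, rfl⟩; exact ⟨p.2, hp⟩
  rw [heq]
  exact hS.subtype_image (hφ measurableSet_Iio)

lemma exists_null_exceptional [MeasurableSpace X] (μ : Measure X) {S : Set X} {ρ : X → X → ℝ}
    (hsym : ∀ x ∈ S, ∀ y ∈ S, ρ x y = ρ y x)
    (htri : ∀ x ∈ S, ∀ y ∈ S, ∀ z ∈ S, ρ x z ≤ ρ x y + ρ y z)
    (hsep : SepOn ρ S)
    (hball : ∀ x ∈ S, ∀ r : ℝ, MeasurableSet {x' | x' ∈ S ∧ ρ x x' < r}) :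
    ∃ U : Set X, MeasurableSet U ∧ μ U = 0 ∧
      ∀ x ∈ S \ U, ∀ r : ℝ, 0 < r → 0 < μ {x' | x' ∈ S ∧ ρ x x' < r} := by
  classical
  obtain ⟨D, hDS, hDc, hD⟩ := hsep
  set B : X → ℕ → Set X := fun d n => {x' | x' ∈ S ∧ ρ d x' < 1/(n+1)} with hB
  refine ⟨⋃ d ∈ D, ⋃ n : ℕ, if μ (B d n) = 0 then B d n else ∅, ?_, ?_, ?_⟩
  · refine MeasurableSet.biUnion hDc fun d hd => MeasurableSet.iUnion fun n => ?_
    split_ifs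
    · exact hball d (hDS hd) _
    · exact MeasurableSet.empty
  · rw [measure_biUnion_null_iff hDc]
    intro d _
    rw [measure_iUnion_null_iff]
    intro n
    split_ifs with h0
    · exact h0
    · simp
  · rintro x ⟨hxS, hxU⟩ r hr
    obtain ⟨n, hn⟩ := exists_nat_one_div_lt (half_pos hr)
    obtain ⟨d, hd, hlt⟩ := hD x hxS (1/(n+1)) (by positivity)
    have hxB : x ∈ B d n := ⟨hxS, by rw [hsym d (hDS hd) x hxS]; exact hlt⟩
    have hBpos : 0 < μ (B d n) := by
      rcases eq_or_ne (μ (B d n)) 0 with h0 | h0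
      · exact absurd (Set.mem_biUnion hd (Set.mem_iUnion.2 ⟨n, by rw [if_pos h0]; exact hxB⟩)) hxU
      · exact pos_iff_ne_zero.2 h0
    refine hBpos.trans_le (measure_mono ?_)
    rintro x' ⟨hx'S, hx'⟩
    refine ⟨hx'S, ?_⟩
    have := htri x hxS d (hDS hd) x' hx'S
    have h1n : 1/((n:ℝ)+1) < r/2 := hn
    linarith



lemma side_lemma {ε : ℝ} [MeasurableSpace X] (μ : Measure X) [IsProbabilityMeasure μ]
    {Xf Xg : Set X} {ρXf ρXg : X → X → ℝ}
    (hXfm : MeasurableSet Xf) (hXgm : MeasurableSet Xg)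
    (hXfμ : 1 - ENNReal.ofReal ε ≤ μ Xf) (hXgμ : 1 - ENNReal.ofReal ε ≤ μ Xg)
    (hρXf : IsAdmissibleSemimetricOn μ Xf ρXf)
    (hρXg : IsAdmissibleSemimetricOn μ Xg ρXg) :
    ∃ G : Set X, MeasurableSet G ∧ G ⊆ Xf ∩ Xg ∧ μ Gᶜ ≤ 2 * ENNReal.ofReal ε ∧
      ∀ x ∈ G, ∀ δ : ℝ, 0 < δ → ∃ A : Set X, A ⊆ Xf ∩ Xg ∧ 0 < μ A ∧
        ∀ x' ∈ A, ρXf x x' < δ ∧ ρXg x x' < δ := by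
  obtain ⟨⟨hfnn, hf0, hfsym, hftri⟩, hfmeas, X₀f, hfsub, hfm0, hfnull, hfsep⟩ := hρXf
  obtain ⟨⟨hgnn, hg0, hgsym, hgtri⟩, hgmeas, X₀g, hgsub, hgm0, hgnull, hgsep⟩ := hρXg
  set S := X₀f ∩ X₀g with hSdef
  have hSm : MeasurableSet S := hfm0.inter hgm0
  have hSf : S ⊆ Xf := (Set.inter_subset_left).trans hfsub
  have hSg : S ⊆ Xg := (Set.inter_subset_right).trans hgsub
  set ρ : X → X → ℝ := fun a b => ρXf a b + ρXg a b with hρdef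
  have hsym : ∀ a ∈ S, ∀ b ∈ S, ρ a b = ρ b a := fun a ha b hb => by
    simp only [hρdef]
    rw [hfsym a (hSf ha) b (hSf hb), hgsym a (hSg ha) b (hSg hb)]
  have htri : ∀ a ∈ S, ∀ b ∈ S, ∀ c ∈ S, ρ a c ≤ ρ a b + ρ b c := fun a ha b hb c hc => by
    have h1 := hftri a (hSf ha) b (hSf hb) c (hSf hc)
    have h2 := hgtri a (hSg ha) b (hSg hb) c (hSg hc)
    simp only [hρdef]
    linarith
  have hsepf : SepOn ρXf S := sepOn_mono Set.inter_subset_left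
    (fun a ha b hb => hfsym a (hfsub ha) b (hfsub hb))
    (fun a ha b hb c hc => hftri a (hfsub ha) b (hfsub hb) c (hfsub hc)) hfsep
  have hsepg : SepOn ρXg S := sepOn_mono Set.inter_subset_right
    (fun a ha b hb => hgsym a (hgsub ha) b (hgsub hb))
    (fun a ha b hb c hc => hgtri a (hgsub ha) b (hgsub hb) c (hgsub hc)) hgsep
  have hsep : SepOn ρ S := sepOn_add
    (fun a ha b hb => hfsym a (hSf ha) b (hSf hb))
    (fun a ha b hb c hc => hftri a (hSf ha) b (hSf hb) c (hSf hc))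
    (fun a ha b hb => hgsym a (hSg ha) b (hSg hb))
    (fun a ha b hb c hc => hgtri a (hSg ha) b (hSg hb) c (hSg hc))
    hsepf hsepg
  have hball : ∀ x ∈ S, ∀ r : ℝ, MeasurableSet {x' | x' ∈ S ∧ ρ x x' < r} := by
    intro x hx r
    refine ball_meas hSm ?_ r
    have hmf : Measurable fun p : S => ρXf x (p : X) := by
      have hincl : Measurable fun p : S => (⟨(p : X), hSf p.2⟩ : Xf) :=
        measurable_subtype_coe.subtype_mk
      exact hfmeas.comp ((measurable_const (a := (⟨x, hSf hx⟩ : Xf))).prodMk hincl)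
    have hmg : Measurable fun p : S => ρXg x (p : X) := by
      have hincl : Measurable fun p : S => (⟨(p : X), hSg p.2⟩ : Xg) :=
        measurable_subtype_coe.subtype_mk
      exact hgmeas.comp ((measurable_const (a := (⟨x, hSg hx⟩ : Xg))).prodMk hincl)
    exact hmf.add hmg
  obtain ⟨U, hUm, hU0, hUpos⟩ := exists_null_exceptional μ hsym htri hsep hball
  refine ⟨S \ U, hSm.diff hUm, (Set.diff_subset).trans (Set.subset_inter hSf hSg), ?_, ?_⟩
  · have h1 : μ Xfᶜ ≤ ENNReal.ofReal ε := by
      rw [measure_compl hXfm (measure_ne_top μ _), measure_univ]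
      calc (1 : ℝ≥0∞) - μ Xf ≤ 1 - (1 - ENNReal.ofReal ε) := tsub_le_tsub_left hXfμ 1
        _ ≤ ENNReal.ofReal ε := tsub_le_iff_right.2 (by rw [add_comm]; exact le_tsub_add)
    have h2 : μ Xgᶜ ≤ ENNReal.ofReal ε := by
      rw [measure_compl hXgm (measure_ne_top μ _), measure_univ]
      calc (1 : ℝ≥0∞) - μ Xg ≤ 1 - (1 - ENNReal.ofReal ε) := tsub_le_tsub_left hXgμ 1
        _ ≤ ENNReal.ofReal ε := tsub_le_iff_right.2 (by rw [add_comm]; exact le_tsub_add)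
    have hcomp : (S \ U)ᶜ ⊆ ((Xfᶜ ∪ (Xf \ X₀f)) ∪ (Xgᶜ ∪ (Xg \ X₀g))) ∪ U := by
      intro a ha
      by_cases haU : a ∈ U
      · exact Or.inr haU
      have haS : a ∉ S := fun h => ha ⟨h, haU⟩
      left
      rcases (Set.mem_inter_iff a X₀f X₀g).not.mp haS |> not_and_or.mp with h | h
      · left
        by_cases haXf : a ∈ Xf
        · exact Or.inr ⟨haXf, h⟩
        · exact Or.inl haXf
      · right
        by_cases haXg : a ∈ Xg
        · exact Or.inr ⟨haXg, h⟩
        · exact Or.inl haXg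
    calc μ (S \ U)ᶜ ≤ μ ((Xfᶜ ∪ (Xf \ X₀f)) ∪ (Xgᶜ ∪ (Xg \ X₀g))) + μ U :=
          (measure_mono hcomp).trans (measure_union_le _ _)
      _ ≤ (μ (Xfᶜ ∪ (Xf \ X₀f)) + μ (Xgᶜ ∪ (Xg \ X₀g))) + μ U :=
          add_le_add (measure_union_le _ _) le_rfl
      _ ≤ ((μ Xfᶜ + μ (Xf \ X₀f)) + (μ Xgᶜ + μ (Xg \ X₀g))) + μ U :=
          add_le_add (add_le_add (measure_union_le _ _) (measure_union_le _ _)) le_rfl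
      _ ≤ ((ENNReal.ofReal ε + 0) + (ENNReal.ofReal ε + 0)) + 0 := by
          refine add_le_add (add_le_add ?_ ?_) hU0.le
          · exact add_le_add h1 hfnull.le
          · exact add_le_add h2 hgnull.le
      _ = 2 * ENNReal.ofReal ε := by ring
  · rintro x hx δ hδ
    refine ⟨{x' | x' ∈ S ∧ ρ x x' < δ}, ?_, hUpos x hx δ hδ, ?_⟩
    · rintro x' ⟨h1, _⟩
      exact ⟨hSf h1, hSg h1⟩
    · rintro x' ⟨h1, h2⟩
      have nnf := hfnn x (hSf hx.1) x' (hSf h1)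
      have nng := hgnn x (hSg hx.1) x' (hSg h1)
      simp only [hρdef] at h2
      constructor <;> linarith

lemma key_lemma [MeasurableSpace X] [MeasurableSpace Y] (μ : Measure X) (ν : Measure Y)
    [IsProbabilityMeasure μ] [IsProbabilityMeasure ν]
    (f g : X × Y → ℝ)
    (hf : ProperlyVirtuallyContinuous μ ν f) (hg : ProperlyVirtuallyContinuous μ ν g)
    (hZ : (μ.prod ν) {p : X × Y | f p ≠ g p} = 0)
    {ε : ℝ} (hε : 0 < ε) :
    ∃ (G : Set X) (H : Set Y), MeasurableSet G ∧ MeasurableSet H ∧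
      μ Gᶜ ≤ 2 * ENNReal.ofReal ε ∧ ν Hᶜ ≤ 2 * ENNReal.ofReal ε ∧
      ∀ x ∈ G, ∀ y ∈ H, f (x, y) = g (x, y) := by
  obtain ⟨Xf, Yf, hXfm, hYfm, hXfμ, hYfν, ρXf, ρYf, hρXf, hρYf, hcf⟩ := hf.2 ε hε
  obtain ⟨Xg, Yg, hXgm, hYgm, hXgμ, hYgν, ρXg, ρYg, hρXg, hρYg, hcg⟩ := hg.2 ε hε
  obtain ⟨G, hGm, hGsub, hGc, hGpos⟩ := side_lemma μ hXfm hXgm hXfμ hXgμ hρXf hρXg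
  obtain ⟨H, hHm, hHsub, hHc, hHpos⟩ := side_lemma ν hYfm hYgm hYfν hYgν hρYf hρYg
  refine ⟨G, H, hGm, hHm, hGc, hHc, ?_⟩
  intro x hx y hy
  by_contra hne
  have hc : 0 < |f (x, y) - g (x, y)| := abs_pos.2 (sub_ne_zero.2 hne)
  set c := |f (x, y) - g (x, y)| with hcdef
  obtain ⟨δf, hδf, hcontf⟩ := hcf x (hGsub hx).1 y (hHsub hy).1 (c/3) (by positivity)
  obtain ⟨δg, hδg, hcontg⟩ := hcg x (hGsub hx).2 y (hHsub hy).2 (c/3) (by positivity)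
  obtain ⟨A, hAsub, hApos, hA⟩ := hGpos x hx (min δf δg) (lt_min hδf hδg)
  obtain ⟨B, hBsub, hBpos, hB⟩ := hHpos y hy (min δf δg) (lt_min hδf hδg)
  have hsub : A ×ˢ B ⊆ {p : X × Y | f p ≠ g p} := by
    rintro ⟨x', y'⟩ ⟨hx', hy'⟩
    obtain ⟨hfx', hgx'⟩ := hA x' hx'
    obtain ⟨hfy', hgy'⟩ := hB y' hy'
    have h1 : |f (x, y) - f (x', y')| < c/3 :=
      hcontf x' (hAsub hx').1 y' (hBsub hy').1
        (hfx'.trans_le (min_le_left _ _)) (hfy'.trans_le (min_le_left _ _))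
    have h2 : |g (x, y) - g (x', y')| < c/3 :=
      hcontg x' (hAsub hx').2 y' (hBsub hy').2
        (hgx'.trans_le (min_le_right _ _)) (hgy'.trans_le (min_le_right _ _))
    intro heq
    have habs1 : |f (x, y) - g (x, y)| ≤ |f (x, y) - f (x', y')| + |f (x', y') - g (x, y)| :=
      abs_sub_le _ _ _
    have habs2 : |f (x', y') - g (x, y)| = |g (x, y) - g (x', y')| := by
      rw [show f (x', y') = g (x', y') from heq, abs_sub_comm]
    rw [← hcdef] at habs1
    linarith
  have hprod : μ.prod ν (A ×ˢ B) = 0 := measure_mono_null hsub hZ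
  rw [Measure.prod_prod] at hprod
  exact absurd hprod (ENNReal.mul_pos hApos.ne' hBpos.ne').ne'

lemma full_of_tail [MeasurableSpace X] (μ : Measure X) [IsProbabilityMeasure μ]
    (G : ℕ → Set X) (hGm : ∀ n, MeasurableSet (G n))
    (hGc : ∀ n, μ (G n)ᶜ ≤ 2 * ENNReal.ofReal ((2⁻¹ : ℝ) ^ n)) :
    μ (⋃ n, ⋂ k, G (k + n)) = 1 := by
  have hmeas : MeasurableSet (⋃ n, ⋂ k, G (k + n)) :=
    MeasurableSet.iUnion fun n => MeasurableSet.iInter fun k => hGm _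
  rw [← prob_compl_eq_zero_iff hmeas]
  have hof : ∀ m : ℕ, ENNReal.ofReal ((2⁻¹ : ℝ) ^ m) = (2⁻¹ : ℝ≥0∞) ^ m := by
    intro m
    rw [ENNReal.ofReal_pow (by norm_num)]
    congr 1
    rw [ENNReal.ofReal_inv_of_pos (by norm_num)]
    norm_num
  have hbound : ∀ n : ℕ, μ (⋃ m, ⋂ k, G (k + m))ᶜ ≤ 4 * (2⁻¹ : ℝ≥0∞) ^ n := by
    intro n
    have hsub : (⋃ m, ⋂ k, G (k + m))ᶜ ⊆ ⋃ k, (G (k + n))ᶜ := by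
      intro a ha
      simp only [Set.mem_compl_iff, Set.mem_iUnion, Set.mem_iInter, not_exists, not_forall] at ha
      obtain ⟨k, hk⟩ := ha n
      exact Set.mem_iUnion.2 ⟨k, hk⟩
    calc μ (⋃ m, ⋂ k, G (k + m))ᶜ ≤ ∑' k, μ (G (k + n))ᶜ :=
          (measure_mono hsub).trans (measure_iUnion_le _)
      _ ≤ ∑' k : ℕ, 2 * ENNReal.ofReal ((2⁻¹ : ℝ) ^ (k + n)) := ENNReal.tsum_le_tsum fun k => hGc _
      _ = 4 * (2⁻¹ : ℝ≥0∞) ^ n := by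
          simp only [hof]
          rw [ENNReal.tsum_mul_left]
          have hgeo : ∑' k : ℕ, (2⁻¹ : ℝ≥0∞) ^ (k + n) = 2 * 2⁻¹ ^ n := by
            simp only [pow_add]
            rw [ENNReal.tsum_mul_right, ENNReal.tsum_geometric, ENNReal.one_sub_inv_two, inv_inv]
          rw [hgeo, ← mul_assoc]
          norm_num
  have htend : Filter.Tendsto (fun n : ℕ => (4 : ℝ≥0∞) * 2⁻¹ ^ n) Filter.atTop (nhds 0) := by
    have h2 : (2⁻¹ : ℝ≥0∞) < 1 := by
      rw [ENNReal.inv_lt_one]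
      exact ENNReal.one_lt_two
    have ht := ENNReal.Tendsto.const_mul (ENNReal.tendsto_pow_atTop_nhds_zero_of_lt_one h2)
      (Or.inr (by norm_num : (4 : ℝ≥0∞) ≠ ⊤))
    simpa using ht
  exact le_antisymm (ge_of_tendsto' htend hbound) zero_le

/-- two properly virtually continuous functions which coincide almost
everywhere coincide everywhere on a product of sets of full measure. -/
theorem properly_virtually_continuous_ae_eq
    [StandardBorelSpace X] [StandardBorelSpace Y]
    (μ : Measure X) (ν : Measure Y)
    [IsProbabilityMeasure μ] [IsProbabilityMeasure ν] [NullSingletonClass μ] [NullSingletonClass ν]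
    (f g : X × Y → ℝ)
    (hf : ProperlyVirtuallyContinuous μ ν f) (hg : ProperlyVirtuallyContinuous μ ν g)
    (hfg : f =ᵐ[μ.prod ν] g) :
    ∃ (X' : Set X) (Y' : Set Y), MeasurableSet X' ∧ MeasurableSet Y' ∧
      μ X' = 1 ∧ ν Y' = 1 ∧
      ∀ x ∈ X', ∀ y ∈ Y', f (x, y) = g (x, y) := by
  have hZ : (μ.prod ν) {p : X × Y | f p ≠ g p} = 0 := by
    have h := ae_iff.mp hfg
    simpa using h
  choose G H hGm hHm hGc hHc hGH using
    fun n : ℕ => key_lemma μ ν f g hf hg hZ (ε := (2⁻¹ : ℝ) ^ n) (by positivity)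
  refine ⟨⋃ n, ⋂ k, G (k + n), ⋃ n, ⋂ k, H (k + n),
    MeasurableSet.iUnion fun n => MeasurableSet.iInter fun k => hGm _,
    MeasurableSet.iUnion fun n => MeasurableSet.iInter fun k => hHm _,
    full_of_tail μ G hGm hGc, full_of_tail ν H hHm hHc, ?_⟩
  intro x hx y hy
  obtain ⟨n₁, hx⟩ := Set.mem_iUnion.1 hx
  obtain ⟨n₂, hy⟩ := Set.mem_iUnion.1 hy
  have hx' : x ∈ G (max n₁ n₂) := by
    have h := Set.mem_iInter.1 hx (max n₁ n₂ - n₁)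
    rwa [Nat.sub_add_cancel (le_max_left _ _)] at h
  have hy' : y ∈ H (max n₁ n₂) := by
    have h := Set.mem_iInter.1 hy (max n₁ n₂ - n₂)
    rwa [Nat.sub_add_cancel (le_max_right _ _)] at h
  exact hGH _ x hx' y hy'


end VirtCont
end

section
/- Let (X, μ) and (Y, ν) be standard probability spaces. A measurable function f : X × Y → ℝ is properly virtually continuous if and only if for every open set U ⊆ ℝ the preimage f⁻¹(U) is virtually open in X × Y. -/
open MeasureTheory Set
open scoped ENNReal

namespace VirtCont

variable {X Y : Type*}

variable [MeasurableSpace X] [MeasurableSpace Y]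

variable {α : Type*}

noncomputable def chi (A : ℕ → Set α) (n : ℕ) (x : α) : ℝ :=
  (A n).indicator (fun _ => 1) x

noncomputable def rho (A : ℕ → Set α) (x y : α) : ℝ :=
  ∑' n, (2:ℝ)⁻¹ ^ n * |chi A n x - chi A n y|

lemma chi_diff_le (A : ℕ → Set α) (n : ℕ) (x y : α) : |chi A n x - chi A n y| ≤ 1 := by
  unfold chi
  by_cases hx : x ∈ A n <;> by_cases hy : y ∈ A n <;>
    simp [indicator_of_mem, indicator_of_notMem, hx, hy]

lemma summable_geo : Summable (fun n : ℕ => (2:ℝ)⁻¹ ^ n) :=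
  summable_geometric_of_lt_one (by norm_num) (by norm_num)

lemma rho_summable (A : ℕ → Set α) (x y : α) :
    Summable (fun n => (2:ℝ)⁻¹ ^ n * |chi A n x - chi A n y|) := by
  apply Summable.of_nonneg_of_le (fun n => by positivity) (fun n => ?_) summable_geo
  calc (2:ℝ)⁻¹ ^ n * |chi A n x - chi A n y| ≤ (2:ℝ)⁻¹ ^ n * 1 :=
        mul_le_mul_of_nonneg_left (chi_diff_le ..) (by positivity)
    _ = (2:ℝ)⁻¹ ^ n := mul_one _

lemma rho_nonneg (A : ℕ → Set α) (x y : α) : 0 ≤ rho A x y :=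
  tsum_nonneg (fun n => by positivity)

lemma rho_self (A : ℕ → Set α) (x : α) : rho A x x = 0 := by
  simp [rho]

lemma rho_symm (A : ℕ → Set α) (x y : α) : rho A x y = rho A y x := by
  simp [rho, abs_sub_comm]

lemma rho_triangle (A : ℕ → Set α) (x y z : α) :
    rho A x z ≤ rho A x y + rho A y z := by
  rw [rho, rho, rho, ← Summable.tsum_add (rho_summable A x y) (rho_summable A y z)]
  apply Summable.tsum_le_tsum _ (rho_summable A x z)
    ((rho_summable A x y).add (rho_summable A y z))
  intro n
  rw [← mul_add]
  apply mul_le_mul_of_nonneg_left _ (by positivity)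
  exact abs_sub_le _ _ _

lemma rho_lt_iff_mem (A : ℕ → Set α) {x y : α} {n : ℕ}
    (h : rho A x y < (2:ℝ)⁻¹ ^ n) : x ∈ A n ↔ y ∈ A n := by
  by_contra hc
  have h1 : |chi A n x - chi A n y| = 1 := by
    unfold chi
    by_cases hx : x ∈ A n <;> by_cases hy : y ∈ A n <;>
      simp [indicator_of_mem, indicator_of_notMem, hx, hy] at hc ⊢
  have hle := Summable.le_tsum (rho_summable A x y) n (fun m _ => by positivity)
  rw [h1, mul_one] at hle
  exact absurd (lt_of_le_of_lt hle h) (lt_irrefl _)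

lemma rho_le_of_agree (A : ℕ → Set α) {x y : α} {n : ℕ}
    (h : ∀ i < n, (x ∈ A i ↔ y ∈ A i)) : rho A x y ≤ 2 * (2:ℝ)⁻¹ ^ n := by
  have hzero : ∀ i < n, (2:ℝ)⁻¹ ^ i * |chi A i x - chi A i y| = 0 := by
    intro i hi
    have hiff := h i hi
    have : chi A i x = chi A i y := by
      unfold chi
      by_cases hx : x ∈ A i
      · rw [indicator_of_mem hx, indicator_of_mem (hiff.mp hx)]
      · rw [indicator_of_notMem hx, indicator_of_notMem (fun hy => hx (hiff.mpr hy))]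
    rw [this]; simp
  have hs := rho_summable A x y
  have key := (Summable.sum_add_tsum_nat_add (f := fun m => (2:ℝ)⁻¹ ^ m * |chi A m x - chi A m y|) n hs).symm
  have hsum0 : (∑ i ∈ Finset.range n, (2:ℝ)⁻¹ ^ i * |chi A i x - chi A i y|) = 0 :=
    Finset.sum_eq_zero (fun i hi => hzero i (Finset.mem_range.mp hi))
  rw [rho, key, hsum0, zero_add]
  have hs1 : Summable (fun m : ℕ => (2:ℝ)⁻¹ ^ m * |chi A m x - chi A m y| ) := hs
  have hs2 : Summable (fun m : ℕ => (2:ℝ)⁻¹ ^ (m + n) * |chi A (m + n) x - chi A (m + n) y|) :=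
    (summable_nat_add_iff n).mpr hs1
  have hs3 : Summable (fun m : ℕ => (2:ℝ)⁻¹ ^ (m + n)) :=
    (summable_nat_add_iff n).mpr summable_geo
  have step1 : (∑' m : ℕ, (2:ℝ)⁻¹ ^ (m + n) * |chi A (m+n) x - chi A (m+n) y|)
      ≤ ∑' m : ℕ, (2:ℝ)⁻¹ ^ (m + n) := by
    apply Summable.tsum_le_tsum _ hs2 hs3
    intro m
    calc (2:ℝ)⁻¹ ^ (m + n) * |chi A (m+n) x - chi A (m+n) y| ≤ (2:ℝ)⁻¹ ^ (m+n) * 1 :=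
        mul_le_mul_of_nonneg_left (chi_diff_le ..) (by positivity)
      _ = _ := mul_one _
  have step2 : (∑' m : ℕ, (2:ℝ)⁻¹ ^ (m + n)) = 2 * (2:ℝ)⁻¹ ^ n := by
    have hc : ∀ m : ℕ, (2:ℝ)⁻¹ ^ (m + n) = (2:ℝ)⁻¹ ^ n * (2:ℝ)⁻¹ ^ m := by
      intro m; rw [pow_add]; ring
    rw [tsum_congr hc, tsum_mul_left, tsum_geometric_of_lt_one (by norm_num) (by norm_num)]
    norm_num; ring
  exact step2 ▸ step1

lemma rho_measurable [MeasurableSpace α] {A : ℕ → Set α} (hA : ∀ n, MeasurableSet (A n)) :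
    Measurable (fun p : α × α => rho A p.1 p.2) := by
  have hterm : ∀ n, Measurable (fun p : α × α => (2:ℝ)⁻¹ ^ n * |chi A n p.1 - chi A n p.2|) := by
    intro n
    apply Measurable.const_mul
    apply Measurable.abs
    apply Measurable.sub
    · exact (measurable_const.indicator (hA n)).comp measurable_fst
    · exact (measurable_const.indicator (hA n)).comp measurable_snd
  have hlim : Filter.Tendsto (fun N : ℕ => fun p : α × α =>
      ∑ n ∈ Finset.range N, (2:ℝ)⁻¹ ^ n * |chi A n p.1 - chi A n p.2|) Filter.atTop
      (nhds (fun p : α × α => rho A p.1 p.2)) := by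
    rw [tendsto_pi_nhds]
    intro p
    exact (rho_summable A p.1 p.2).hasSum.tendsto_sum_nat
  exact measurable_of_tendsto_metrizable
    (fun N => Finset.measurable_sum _ (fun n _ => hterm n)) hlim


lemma exists_pow_half_lt {ε : ℝ} (hε : 0 < ε) : ∃ n : ℕ, 2 * (2:ℝ)⁻¹ ^ n < ε := by
  obtain ⟨n, hn⟩ := exists_pow_lt_of_lt_one (by positivity : (0:ℝ) < ε / 2) (by norm_num : (2:ℝ)⁻¹ < 1)
  exact ⟨n, by linarith⟩

lemma sepOn_rho (A : ℕ → Set α) (S : Set α) : SepOn (rho A) S := by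
  classical
  let T : (n : ℕ) → (Fin n → Bool) → Set α :=
    fun n σ => {x | x ∈ S ∧ ∀ i : Fin n, decide (x ∈ A i) = σ i}
  let pick : (n : ℕ) → (Fin n → Bool) → Set α :=
    fun n σ => if h : (T n σ).Nonempty then {h.choose} else ∅
  refine ⟨⋃ n, ⋃ σ : Fin n → Bool, pick n σ, ?_, ?_, ?_⟩
  · intro x hx
    simp only [mem_iUnion] at hx
    obtain ⟨n, σ, hx⟩ := hx
    by_cases h : (T n σ).Nonempty
    · simp only [pick, dif_pos h, mem_singleton_iff] at hx
      subst hx; exact h.choose_spec.1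
    · simp [pick, dif_neg h] at hx
  · refine countable_iUnion fun n => countable_iUnion fun σ => ?_
    by_cases h : (T n σ).Nonempty
    · simp only [pick, dif_pos h]; exact countable_singleton _
    · simp only [pick, dif_neg h]; exact countable_empty
  · intro x hx ε hε
    obtain ⟨n, hn⟩ := exists_pow_half_lt hε
    set σ : Fin n → Bool := fun i => decide (x ∈ A i) with hσ
    have h : (T n σ).Nonempty := ⟨x, hx, fun i => rfl⟩
    refine ⟨h.choose, ?_, ?_⟩
    · simp only [mem_iUnion]
      exact ⟨n, σ, by simp only [pick, dif_pos h, mem_singleton_iff]⟩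
    · refine lt_of_le_of_lt (rho_le_of_agree A (fun i hi => ?_)) hn
      have hd := h.choose_spec.2 ⟨i, hi⟩
      simp only [hσ] at hd
      constructor
      · intro hxa
        have h2 : decide (h.choose ∈ A i) = true := by
          rw [hd]; exact decide_eq_true hxa
        exact of_decide_eq_true h2
      · intro hda
        have h2 : decide (x ∈ A i) = true := by
          rw [← hd] at *; exact decide_eq_true hda
        exact of_decide_eq_true h2


lemma sepOn_congr {α : Type*} {ρ : α → α → ℝ} {S : Set α} (h : SepOn ρ S) : SepOn ρ S := h

lemma sepOn_mono_s10 {α : Type*} {ρ : α → α → ℝ} {S X₀ P : Set α}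
    (hsem : IsSemimetricOn ρ S) (hX₀S : X₀ ⊆ S) (hPX₀ : P ⊆ X₀)
    (hsep : SepOn ρ X₀) : SepOn ρ P := by
  classical
  obtain ⟨D, hDX₀, hDc, hD⟩ := hsep
  obtain ⟨hnn, hself, hsymm, htri⟩ := hsem
  let pick : α → ℕ → Set α := fun d k =>
    if h : ∃ x ∈ P, ρ d x < (2:ℝ)⁻¹ ^ k then {h.choose} else ∅
  refine ⟨⋃ d ∈ D, ⋃ k : ℕ, pick d k, ?_, ?_, ?_⟩
  · intro x hx
    simp only [mem_iUnion] at hx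
    obtain ⟨d, hd, k, hx⟩ := hx
    by_cases h : ∃ x ∈ P, ρ d x < (2:ℝ)⁻¹ ^ k
    · simp only [pick, dif_pos h, mem_singleton_iff] at hx
      subst hx; exact h.choose_spec.1
    · simp only [pick, dif_neg h] at hx
      exact absurd hx (notMem_empty _)
  · apply hDc.biUnion
    intro d _
    refine countable_iUnion fun k => ?_
    by_cases h : ∃ x ∈ P, ρ d x < (2:ℝ)⁻¹ ^ k
    · simp only [pick, dif_pos h]; exact countable_singleton _
    · simp only [pick, dif_neg h]; exact countable_empty
  · intro x hx ε hε
    obtain ⟨k, hk⟩ := exists_pow_half_lt hε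
    obtain ⟨d, hd, hρ⟩ := hD x (hPX₀ hx) ((2:ℝ)⁻¹ ^ k) (by positivity)
    have hex : ∃ x' ∈ P, ρ d x' < (2:ℝ)⁻¹ ^ k :=
      ⟨x, hx, by rwa [← hsymm x (hX₀S (hPX₀ hx)) d (hX₀S (hDX₀ hd))]⟩
    refine ⟨hex.choose, ?_, ?_⟩
    · simp only [mem_iUnion]
      exact ⟨d, hd, k, by simp only [pick, dif_pos hex, mem_singleton_iff]⟩
    · obtain ⟨hP', hρ'⟩ := hex.choose_spec
      have hxS := hX₀S (hPX₀ hx)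
      have hdS := hX₀S (hDX₀ hd)
      have hx'S := hX₀S (hPX₀ hP')
      calc ρ x hex.choose ≤ ρ x d + ρ d hex.choose := htri x hxS d hdS _ hx'S
        _ < (2:ℝ)⁻¹ ^ k + (2:ℝ)⁻¹ ^ k := add_lt_add hρ hρ'
        _ < ε := by linarith

lemma ball_meas_s10 {α : Type*} [MeasurableSpace α] {ρ : α → α → ℝ} {S : Set α}
    (hS : MeasurableSet S) (hm : Measurable (fun p : S × S => ρ (p.1 : α) (p.2 : α)))
    {d : α} (hd : d ∈ S) (r : ℝ) :
    MeasurableSet {x | x ∈ S ∧ ρ d x < r} := by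
  have hg : Measurable (fun z : S => ρ d (z : α)) :=
    hm.comp ((measurable_const (a := (⟨d, hd⟩ : S))).prodMk measurable_id)
  have h1 : MeasurableSet {z : S | ρ d (z : α) < r} := hg measurableSet_Iio
  have h2 := hS.subtype_image h1
  convert h2 using 1
  ext x
  simp only [mem_setOf_eq, mem_image, Subtype.exists, exists_and_right, exists_eq_right]
  constructor
  · rintro ⟨hxS, hlt⟩; exact ⟨hxS, hlt⟩
  · rintro ⟨hxS, hlt⟩; exact ⟨hxS, hlt⟩

lemma exists_rectangles {X Y : Type*} [MeasurableSpace X] [MeasurableSpace Y]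
    {S P : Set X} {T Q : Set Y} {ρX : X → X → ℝ} {ρY : Y → Y → ℝ} {f : X × Y → ℝ}
    (hSm : MeasurableSet S) (hTm : MeasurableSet T)
    (hPm : MeasurableSet P) (hQm : MeasurableSet Q)
    (hPS : P ⊆ S) (hQT : Q ⊆ T)
    (hsemX : IsSemimetricOn ρX S) (hsemY : IsSemimetricOn ρY T)
    (hmX : Measurable (fun p : S × S => ρX (p.1 : X) (p.2 : X)))
    (hmY : Measurable (fun p : T × T => ρY (p.1 : Y) (p.2 : Y)))
    (hsepX : SepOn ρX P) (hsepY : SepOn ρY Q)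
    (hcont : ContOnProd ρX ρY S T f) {U : Set ℝ} (hU : IsOpen U) :
    ∃ (A : ℕ → Set X) (B : ℕ → Set Y),
      (∀ n, MeasurableSet (A n)) ∧ (∀ n, MeasurableSet (B n)) ∧
      f ⁻¹' U ∩ (P ×ˢ Q) = ⋃ n, A n ×ˢ B n := by
  classical
  by_cases hPQ : P.Nonempty ∧ Q.Nonempty
  case neg =>
    refine ⟨fun _ => ∅, fun _ => ∅, fun _ => MeasurableSet.empty, fun _ => MeasurableSet.empty, ?_⟩
    have hPQe : P ×ˢ Q = ∅ := by
      rcases not_and_or.mp hPQ with h | h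
      · rw [not_nonempty_iff_eq_empty.mp h, empty_prod]
      · rw [not_nonempty_iff_eq_empty.mp h, prod_empty]
    simp [hPQe]
  obtain ⟨hPne, hQne⟩ := hPQ
  obtain ⟨D, hDP, hDc, hD⟩ := hsepX
  obtain ⟨E, hEQ, hEc, hE⟩ := hsepY
  obtain ⟨hnnX, hselfX, hsymmX, htriX⟩ := hsemX
  obtain ⟨hnnY, hselfY, hsymmY, htriY⟩ := hsemY
  obtain ⟨x₀, hx₀⟩ := hPne
  obtain ⟨d₀, hd₀, -⟩ := hD x₀ hx₀ 1 one_pos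
  obtain ⟨y₀, hy₀⟩ := hQne
  obtain ⟨e₀, he₀, -⟩ := hE y₀ hy₀ 1 one_pos
  obtain ⟨gD, hgD⟩ := hDc.exists_eq_range ⟨d₀, hd₀⟩
  obtain ⟨gE, hgE⟩ := hEc.exists_eq_range ⟨e₀, he₀⟩
  have hgDP : ∀ i, gD i ∈ P := fun i => hDP (by rw [hgD]; exact mem_range_self i)
  have hgEQ : ∀ j, gE j ∈ Q := fun j => hEQ (by rw [hgE]; exact mem_range_self j)
  have hgDS : ∀ i, gD i ∈ S := fun i => hPS (hgDP i)
  have hgET : ∀ j, gE j ∈ T := fun j => hQT (hgEQ j)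
  let ballX : ℕ → ℚ → Set X := fun i k => P ∩ {x | x ∈ S ∧ ρX (gD i) x < (k : ℝ)}
  let ballY : ℕ → ℚ → Set Y := fun j k => Q ∩ {y | y ∈ T ∧ ρY (gE j) y < (k : ℝ)}
  have hballXm : ∀ i k, MeasurableSet (ballX i k) :=
    fun i k => hPm.inter (ball_meas_s10 hSm hmX (hgDS i) _)
  have hballYm : ∀ j k, MeasurableSet (ballY j k) :=
    fun j k => hQm.inter (ball_meas_s10 hTm hmY (hgET j) _)
  let R : ℕ × ℕ × ℚ → Set X := fun t =>
    if (ballX t.1 t.2.2) ×ˢ (ballY t.2.1 t.2.2) ⊆ f ⁻¹' U then ballX t.1 t.2.2 else ∅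
  let R' : ℕ × ℕ × ℚ → Set Y := fun t => ballY t.2.1 t.2.2
  have key : f ⁻¹' U ∩ (P ×ˢ Q) = ⋃ t : ℕ × ℕ × ℚ, R t ×ˢ R' t := by
    apply Subset.antisymm
    · rintro ⟨x, y⟩ ⟨hfU, hxP, hyQ⟩
      obtain ⟨ε, hε, hball⟩ := Metric.isOpen_iff.mp hU _ hfU
      obtain ⟨δ, hδ, hδc⟩ := hcont x (hPS hxP) y (hQT hyQ) ε hε
      obtain ⟨d, hdD, hdx⟩ := hD x hxP (δ / 4) (by linarith)
      obtain ⟨ee, heE, hey⟩ := hE y hyQ (δ / 4) (by linarith)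
      obtain ⟨i, hi⟩ : ∃ i, gD i = d := by
        have := hdD; rw [hgD] at this; exact this
      obtain ⟨j, hj⟩ : ∃ j, gE j = ee := by
        have := heE; rw [hgE] at this; exact this
      obtain ⟨k, hk1, hk2⟩ := exists_rat_btwn (show δ / 4 < δ / 2 by linarith)
      refine mem_iUnion.mpr ⟨(i, j, k), ?_⟩
      have hxS := hPS hxP
      have hyT := hQT hyQ
      have hsub : (ballX i k) ×ˢ (ballY j k) ⊆ f ⁻¹' U := by
        rintro ⟨x', y'⟩ ⟨⟨hx'P, hx'S, hx'ρ⟩, hy'Q, hy'T, hy'ρ⟩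
        have h5 : ρX x x' < δ := by
          have := htriX x hxS (gD i) (hgDS i) x' hx'S
          have h6 : ρX x (gD i) < δ / 4 := by rw [hi]; exact hdx
          linarith
        have h7 : ρY y y' < δ := by
          have := htriY y hyT (gE j) (hgET j) y' hy'T
          have h8 : ρY y (gE j) < δ / 4 := by rw [hj]; exact hey
          linarith
        have h9 := hδc x' (hPS hx'P) y' (hQT hy'Q) h5 h7
        apply hball
        rw [Metric.mem_ball, Real.dist_eq, abs_sub_comm]
        exact h9
      have hmemx : x ∈ ballX i k := by
        refine ⟨hxP, hxS, ?_⟩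
        have : ρX (gD i) x = ρX x (gD i) := hsymmX (gD i) (hgDS i) x hxS
        rw [this, hi]
        linarith
      have hmemy : y ∈ ballY j k := by
        refine ⟨hyQ, hyT, ?_⟩
        have : ρY (gE j) y = ρY y (gE j) := hsymmY (gE j) (hgET j) y hyT
        rw [this, hj]
        linarith
      show (x, y) ∈ R (i, j, k) ×ˢ R' (i, j, k)
      simp only [R, R', if_pos hsub]
      exact ⟨hmemx, hmemy⟩
    · rintro p hp
      obtain ⟨t, ht⟩ := mem_iUnion.mp hp
      by_cases hc : (ballX t.1 t.2.2) ×ˢ (ballY t.2.1 t.2.2) ⊆ f ⁻¹' U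
      · simp only [R, R', if_pos hc] at ht
        exact ⟨hc ht, ht.1.1, ht.2.1⟩
      · simp only [R, R', if_neg hc] at ht
        exact absurd ht.1 (notMem_empty _)
  let e2 : ℕ ≃ ℕ × ℕ × ℚ := (Denumerable.eqv (ℕ × ℕ × ℚ)).symm
  refine ⟨fun n => R (e2 n), fun n => R' (e2 n), fun n => ?_, fun n => ?_, ?_⟩
  · by_cases hc : (ballX (e2 n).1 (e2 n).2.2) ×ˢ (ballY (e2 n).2.1 (e2 n).2.2) ⊆ f ⁻¹' U
    · simpa only [R, if_pos hc] using hballXm (e2 n).1 (e2 n).2.2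
    · simpa only [R, if_neg hc] using MeasurableSet.empty
  · exact hballYm (e2 n).2.1 (e2 n).2.2
  · rw [key]
    ext p
    simp only [mem_iUnion]
    constructor
    · rintro ⟨t, h⟩; exact ⟨e2.symm t, by rwa [e2.apply_symm_apply]⟩
    · rintro ⟨n, h⟩; exact ⟨e2 n, h⟩


lemma hgeo_two : (∑' j : ℕ, (ENNReal.ofReal 2⁻¹) ^ j) = 2 := by
  rw [ENNReal.tsum_geometric]
  rw [ENNReal.ofReal_inv_of_pos two_pos, ENNReal.ofReal_ofNat, ENNReal.one_sub_inv_two, inv_inv]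

lemma tail_bound {α : Type*} [MeasurableSpace α] (m : Measure α) (Z : ℕ → Set α) (k : ℕ)
    (hZ : ∀ j, m (Z j)ᶜ ≤ ENNReal.ofReal ((2:ℝ)⁻¹ ^ j)) :
    m (⋂ j : ℕ, Z (k + j))ᶜ ≤ ENNReal.ofReal ((2:ℝ)⁻¹ ^ k) * 2 := by
  have hc : (⋂ j : ℕ, Z (k + j))ᶜ = ⋃ j : ℕ, (Z (k + j))ᶜ := by rw [compl_iInter]
  rw [hc]
  refine le_trans (measure_iUnion_le _) ?_
  refine le_trans (ENNReal.tsum_le_tsum (fun j => hZ (k + j))) ?_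
  have heq : ∀ j : ℕ, ENNReal.ofReal ((2:ℝ)⁻¹ ^ (k + j))
      = ENNReal.ofReal ((2:ℝ)⁻¹ ^ k) * (ENNReal.ofReal 2⁻¹) ^ j := by
    intro j
    rw [pow_add, ENNReal.ofReal_mul (by positivity), ENNReal.ofReal_pow (by norm_num),
      ENNReal.ofReal_pow (by norm_num), ← ENNReal.ofReal_pow (by norm_num)]
  rw [tsum_congr heq, ENNReal.tsum_mul_left, hgeo_two]

lemma forward_vo {X Y : Type*} [MeasurableSpace X] [MeasurableSpace Y]
    (μ : Measure X) (ν : Measure Y) [IsProbabilityMeasure μ] [IsProbabilityMeasure ν]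
    {f : X × Y → ℝ} (hpvc : ProperlyVirtuallyContinuous μ ν f)
    {U : Set ℝ} (hU : IsOpen U) : VirtuallyOpen μ ν (f ⁻¹' U) := by
  classical
  have h := fun k : ℕ => hpvc.2 ((2:ℝ)⁻¹ ^ k) (by positivity)
  choose S T hSm hTm hSμ hTν ρX ρY admX admY cont using h
  choose X0 hX0S hX0m hX0null hX0sep using fun k => (admX k).2.2
  choose Y0 hY0T hY0m hY0null hY0sep using fun k => (admY k).2.2
  have hX0c : ∀ k, μ (X0 k)ᶜ ≤ ENNReal.ofReal ((2:ℝ)⁻¹ ^ k) := by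
    intro k
    have h1 : 1 - ENNReal.ofReal ((2:ℝ)⁻¹ ^ k) ≤ μ (X0 k) := by
      refine le_trans (hSμ k) ?_
      calc μ (S k) ≤ μ (X0 k ∪ (S k \ X0 k)) := measure_mono (fun x hx => by
            by_cases hm : x ∈ X0 k
            · exact Or.inl hm
            · exact Or.inr ⟨hx, hm⟩)
        _ ≤ μ (X0 k) + μ (S k \ X0 k) := measure_union_le _ _
        _ = μ (X0 k) := by rw [hX0null k, add_zero]
    rw [measure_compl (hX0m k) (measure_ne_top μ _), measure_univ, tsub_le_iff_right]
    have h2 := tsub_le_iff_right.mp h1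
    rwa [add_comm] at h2
  have hY0c : ∀ k, ν (Y0 k)ᶜ ≤ ENNReal.ofReal ((2:ℝ)⁻¹ ^ k) := by
    intro k
    have h1 : 1 - ENNReal.ofReal ((2:ℝ)⁻¹ ^ k) ≤ ν (Y0 k) := by
      refine le_trans (hTν k) ?_
      calc ν (T k) ≤ ν (Y0 k ∪ (T k \ Y0 k)) := measure_mono (fun y hy => by
            by_cases hm : y ∈ Y0 k
            · exact Or.inl hm
            · exact Or.inr ⟨hy, hm⟩)
        _ ≤ ν (Y0 k) + ν (T k \ Y0 k) := measure_union_le _ _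
        _ = ν (Y0 k) := by rw [hY0null k, add_zero]
    rw [measure_compl (hY0m k) (measure_ne_top ν _), measure_univ, tsub_le_iff_right]
    have h2 := tsub_le_iff_right.mp h1
    rwa [add_comm] at h2
  set Xt : ℕ → Set X := fun k => ⋂ j : ℕ, X0 (k + j) with hXt
  set Yt : ℕ → Set Y := fun k => ⋂ j : ℕ, Y0 (k + j) with hYt
  have hXtm : ∀ k, MeasurableSet (Xt k) := fun k => MeasurableSet.iInter fun j => hX0m _
  have hYtm : ∀ k, MeasurableSet (Yt k) := fun k => MeasurableSet.iInter fun j => hY0m _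
  have hXtmono : Monotone Xt := monotone_nat_of_le_succ (fun k x hx => mem_iInter.mpr (fun j => by
    have h3 := mem_iInter.mp hx (j + 1)
    rwa [show k + (j + 1) = (k + 1) + j by ring] at h3))
  have hYtmono : Monotone Yt := monotone_nat_of_le_succ (fun k y hy => mem_iInter.mpr (fun j => by
    have h3 := mem_iInter.mp hy (j + 1)
    rwa [show k + (j + 1) = (k + 1) + j by ring] at h3))
  have hXtsub : ∀ k, Xt k ⊆ X0 k := fun k x hx => by
    have h3 := mem_iInter.mp hx 0; rwa [add_zero] at h3
  have hYtsub : ∀ k, Yt k ⊆ Y0 k := fun k y hy => by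
    have h3 := mem_iInter.mp hy 0; rwa [add_zero] at h3
  have hXtc : ∀ k, μ (Xt k)ᶜ ≤ ENNReal.ofReal ((2:ℝ)⁻¹ ^ k) * 2 := fun k => by
    simp only [hXt]; exact tail_bound μ X0 k hX0c
  have hYtc : ∀ k, ν (Yt k)ᶜ ≤ ENNReal.ofReal ((2:ℝ)⁻¹ ^ k) * 2 := fun k => by
    simp only [hYt]; exact tail_bound ν Y0 k hY0c
  have htend : Filter.Tendsto (fun k : ℕ => ENNReal.ofReal ((2:ℝ)⁻¹ ^ k) * 2)
      Filter.atTop (nhds 0) := by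
    have h0 : Filter.Tendsto (fun k : ℕ => (ENNReal.ofReal 2⁻¹) ^ k) Filter.atTop (nhds 0) :=
      ENNReal.tendsto_pow_atTop_nhds_zero_of_lt_one (ENNReal.ofReal_lt_one.mpr (by norm_num))
    have heq : (fun k : ℕ => ENNReal.ofReal ((2:ℝ)⁻¹ ^ k) * 2)
        = fun k : ℕ => (ENNReal.ofReal 2⁻¹) ^ k * 2 := by
      funext k; rw [ENNReal.ofReal_pow (by norm_num)]
    rw [heq]
    have h2 := ENNReal.Tendsto.mul_const h0 (Or.inr (by norm_num : (2:ℝ≥0∞) ≠ ⊤))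
    simpa using h2
  have hX'null : μ (⋃ k, Xt k)ᶜ = 0 := by
    refine le_antisymm ?_ zero_le
    refine ge_of_tendsto htend (Filter.Eventually.of_forall (fun k => ?_))
    exact le_trans (measure_mono (compl_subset_compl.mpr (subset_iUnion Xt k))) (hXtc k)
  have hY'null : ν (⋃ k, Yt k)ᶜ = 0 := by
    refine le_antisymm ?_ zero_le
    refine ge_of_tendsto htend (Filter.Eventually.of_forall (fun k => ?_))
    exact le_trans (measure_mono (compl_subset_compl.mpr (subset_iUnion Yt k))) (hYtc k)
  -- rectangles at each level
  have hrect := fun k : ℕ => exists_rectangles (hSm k) (hTm k) (hXtm k) (hYtm k)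
    ((hXtsub k).trans (hX0S k)) ((hYtsub k).trans (hY0T k))
    (admX k).1 (admY k).1 (admX k).2.1 (admY k).2.1
    (sepOn_mono_s10 (admX k).1 (hX0S k) (hXtsub k) (hX0sep k))
    (sepOn_mono_s10 (admY k).1 (hY0T k) (hYtsub k) (hY0sep k))
    (cont k) hU
  choose Ak Bk hAkm hBkm hkEq using hrect
  let e3 : ℕ ≃ ℕ × ℕ := (Denumerable.eqv (ℕ × ℕ)).symm
  refine ⟨⋃ k, Xt k, ⋃ k, Yt k,
    MeasurableSet.iUnion hXtm, MeasurableSet.iUnion hYtm,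
    (prob_compl_eq_zero_iff (MeasurableSet.iUnion hXtm)).mp hX'null,
    (prob_compl_eq_zero_iff (MeasurableSet.iUnion hYtm)).mp hY'null,
    fun n => Ak (e3 n).1 (e3 n).2, fun n => Bk (e3 n).1 (e3 n).2,
    fun n => hAkm _ _, fun n => hBkm _ _, ?_⟩
  have hstep : f ⁻¹' U ∩ ((⋃ k, Xt k) ×ˢ (⋃ k, Yt k))
      = ⋃ k, (f ⁻¹' U ∩ (Xt k ×ˢ Yt k)) := by
    apply Subset.antisymm
    · rintro ⟨x, y⟩ ⟨hfU, hx, hy⟩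
      obtain ⟨a, ha⟩ := mem_iUnion.mp hx
      obtain ⟨b, hb⟩ := mem_iUnion.mp hy
      exact mem_iUnion.mpr ⟨max a b, hfU, hXtmono (le_max_left a b) ha,
        hYtmono (le_max_right a b) hb⟩
    · refine iUnion_subset (fun k => ?_)
      rintro ⟨x, y⟩ ⟨hfU, hx, hy⟩
      exact ⟨hfU, mem_iUnion.mpr ⟨k, hx⟩, mem_iUnion.mpr ⟨k, hy⟩⟩
  rw [hstep]
  have hk2 : ∀ k, f ⁻¹' U ∩ (Xt k ×ˢ Yt k) = ⋃ n, Ak k n ×ˢ Bk k n := hkEq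
  ext p
  simp only [mem_iUnion]
  constructor
  · rintro ⟨k, hp⟩
    rw [hk2 k] at hp
    obtain ⟨n, hn⟩ := mem_iUnion.mp hp
    exact ⟨e3.symm (k, n), by rwa [e3.apply_symm_apply]⟩
  · rintro ⟨m, hm⟩
    refine ⟨(e3 m).1, ?_⟩
    rw [hk2 (e3 m).1]
    exact mem_iUnion.mpr ⟨(e3 m).2, hm⟩


lemma isAdmissibleOn_rho {α : Type*} [MeasurableSpace α] (μ : Measure α) {S : Set α}
    (hS : MeasurableSet S) {A : ℕ → Set α} (hA : ∀ n, MeasurableSet (A n)) :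
    IsAdmissibleSemimetricOn μ S (rho A) := by
  refine ⟨⟨fun x _ y _ => rho_nonneg A x y, fun x _ => rho_self A x,
    fun x _ y _ => rho_symm A x y, fun x _ y _ z _ => rho_triangle A x y z⟩, ?_,
    S, subset_rfl, hS, by simp, sepOn_rho A S⟩
  exact (rho_measurable hA).comp
    ((measurable_subtype_coe.comp measurable_fst).prodMk
      (measurable_subtype_coe.comp measurable_snd))

lemma backward_pvc {X Y : Type*} [MeasurableSpace X] [MeasurableSpace Y]
    (μ : Measure X) (ν : Measure Y) [IsProbabilityMeasure μ] [IsProbabilityMeasure ν]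
    {f : X × Y → ℝ} (hf : Measurable f)
    (hvo : ∀ U : Set ℝ, IsOpen U → VirtuallyOpen μ ν (f ⁻¹' U)) :
    ProperlyVirtuallyContinuous μ ν f := by
  classical
  have h := fun pq : ℚ × ℚ => hvo (Ioo (pq.1 : ℝ) (pq.2 : ℝ)) isOpen_Ioo
  choose X' Y' hX'm hY'm hX'1 hY'1 A B hAm hBm hEq using h
  set Xs : Set X := ⋂ pq : ℚ × ℚ, X' pq with hXs
  set Ys : Set Y := ⋂ pq : ℚ × ℚ, Y' pq with hYs
  have hXsm : MeasurableSet Xs := MeasurableSet.iInter fun pq => hX'm pq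
  have hYsm : MeasurableSet Ys := MeasurableSet.iInter fun pq => hY'm pq
  have hXs1 : μ Xs = 1 := by
    rw [← prob_compl_eq_zero_iff hXsm]
    have hc : Xsᶜ = ⋃ pq : ℚ × ℚ, (X' pq)ᶜ := by rw [hXs, compl_iInter]
    rw [hc]
    exact measure_iUnion_null fun pq => (prob_compl_eq_zero_iff (hX'm pq)).mpr (hX'1 pq)
  have hYs1 : ν Ys = 1 := by
    rw [← prob_compl_eq_zero_iff hYsm]
    have hc : Ysᶜ = ⋃ pq : ℚ × ℚ, (Y' pq)ᶜ := by rw [hYs, compl_iInter]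
    rw [hc]
    exact measure_iUnion_null fun pq => (prob_compl_eq_zero_iff (hY'm pq)).mpr (hY'1 pq)
  set e : ℕ ≃ (ℚ × ℚ) × ℕ := (Denumerable.eqv ((ℚ × ℚ) × ℕ)).symm with he
  set At : ℕ → Set X := fun n => A (e n).1 (e n).2 ∩ Xs with hAt
  set Bt : ℕ → Set Y := fun n => B (e n).1 (e n).2 ∩ Ys with hBt
  have hAtm : ∀ n, MeasurableSet (At n) := fun n => (hAm _ _).inter hXsm
  have hBtm : ∀ n, MeasurableSet (Bt n) := fun n => (hBm _ _).inter hYsm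
  refine ⟨hf, fun ε hε => ⟨Xs, Ys, hXsm, hYsm, by rw [hXs1]; exact tsub_le_self,
    by rw [hYs1]; exact tsub_le_self, rho At, rho Bt,
    isAdmissibleOn_rho μ hXsm hAtm, isAdmissibleOn_rho ν hYsm hBtm, ?_⟩⟩
  intro x hx y hy ε' hε'
  obtain ⟨p, hp1, hp2⟩ := exists_rat_btwn (show f (x, y) - ε' < f (x, y) by linarith)
  obtain ⟨q, hq1, hq2⟩ := exists_rat_btwn (show f (x, y) < f (x, y) + ε' by linarith)
  have hmem : (x, y) ∈ f ⁻¹' (Ioo (p : ℝ) (q : ℝ)) ∩ (X' (p, q) ×ˢ Y' (p, q)) :=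
    ⟨⟨hp2, hq1⟩, mem_iInter.mp hx (p, q), mem_iInter.mp hy (p, q)⟩
  rw [hEq (p, q)] at hmem
  obtain ⟨m, hm⟩ := mem_iUnion.mp hmem
  set n : ℕ := e.symm ((p, q), m) with hn
  have hen : e n = ((p, q), m) := e.apply_symm_apply _
  have hAtn : At n = A (p, q) m ∩ Xs := by rw [hAt]; simp only [hen]
  have hBtn : Bt n = B (p, q) m ∩ Ys := by rw [hBt]; simp only [hen]
  refine ⟨(2 : ℝ)⁻¹ ^ n, by positivity, ?_⟩
  intro x' hx' y' hy' hdx hdy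
  have hxAt : x ∈ At n := by rw [hAtn]; exact ⟨hm.1, hx⟩
  have hyBt : y ∈ Bt n := by rw [hBtn]; exact ⟨hm.2, hy⟩
  have hx'At : x' ∈ At n := (rho_lt_iff_mem At hdx).mp hxAt
  have hy'Bt : y' ∈ Bt n := (rho_lt_iff_mem Bt hdy).mp hyBt
  rw [hAtn] at hx'At; rw [hBtn] at hy'Bt
  have h2 : (x', y') ∈ ⋃ k, A (p, q) k ×ˢ B (p, q) k :=
    mem_iUnion.mpr ⟨m, hx'At.1, hy'Bt.1⟩
  rw [← hEq (p, q)] at h2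
  have h3 : (p : ℝ) < f (x', y') ∧ f (x', y') < (q : ℝ) := h2.1
  rw [abs_lt]
  constructor <;> [linarith [h3.2]; linarith [h3.1]]

/-- a measurable function of two variables is properly virtually continuous
iff the preimage of every open subset of `ℝ` is virtually open. -/
theorem properly_virtually_continuous_iff_preimages_virtually_open
    [StandardBorelSpace X] [StandardBorelSpace Y]
    (μ : Measure X) (ν : Measure Y)
    [IsProbabilityMeasure μ] [IsProbabilityMeasure ν] [NullSingletonClass μ] [NullSingletonClass ν]
    (f : X × Y → ℝ) (hf : Measurable f) :
    ProperlyVirtuallyContinuous μ ν f ↔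
      ∀ U : Set ℝ, IsOpen U → VirtuallyOpen μ ν (f ⁻¹' U) := by
  constructor
  · intro hpvc U hU
    exact forward_vo μ ν hpvc hU
  · intro hvo
    exact backward_pvc μ ν hf hvo

end VirtCont
end

section
/- Let (X, μ) and (Y, ν) be standard probability spaces and let Z ⊆ X × Y be a virtually open measurable set. Then the thickness and the proper thickness of Z coincide: thi(Z) = sthi(Z). -/
open MeasureTheory Set
open scoped ENNReal

namespace VirtCont

variable {X Y : Type*}

variable [MeasurableSpace X] [MeasurableSpace Y]

/-- for a virtually open measurable set the thickness and the proper
thickness coincide. -/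
theorem thi_eq_sthi_of_virtuallyOpen
    [StandardBorelSpace X] [StandardBorelSpace Y]
    (μ : Measure X) (ν : Measure Y)
    [IsProbabilityMeasure μ] [IsProbabilityMeasure ν] [NullSingletonClass μ] [NullSingletonClass ν]
    (Z : Set (X × Y)) (hZ : MeasurableSet Z) (hvo : VirtuallyOpen μ ν Z) :
    thi μ ν Z = sthi μ ν Z := by
  classical
  obtain ⟨X', Y', hX', hY', hμX', hνY', A, B, hA, hB, hZeq⟩ := hvo
  refine le_antisymm ?_ ?_
  · -- thi ≤ sthi
    refine le_iInf fun A0 => le_iInf fun B0 => le_iInf fun hA0 => le_iInf fun hB0 =>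
      le_iInf fun hcov => ?_
    refine iInf_le_of_le A0 (iInf_le_of_le B0 (iInf_le_of_le hA0 (iInf_le_of_le hB0
      (iInf_le_of_le ?_ le_rfl))))
    rw [diff_eq_empty.2 hcov, measure_empty]
  · -- sthi ≤ thi
    refine le_iInf fun A0 => le_iInf fun B0 => le_iInf fun hA0 => le_iInf fun hB0 =>
      le_iInf fun h0 => ?_
    set C := (A0 ×ˢ (univ : Set Y)) ∪ ((univ : Set X) ×ˢ B0) with hC
    have key : ∀ n, μ (A n \ A0) = 0 ∨ ν (B n \ B0) = 0 := by
      intro n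
      have hsub : (A n ×ˢ B n) \ C ⊆ Z \ C := by
        refine diff_subset_diff_left ?_
        intro p hp
        have hmem : p ∈ Z ∩ (X' ×ˢ Y') := by
          rw [hZeq]; exact mem_iUnion.2 ⟨n, hp⟩
        exact hmem.1
      have h1 : (μ.prod ν) ((A n \ A0) ×ˢ (B n \ B0)) = 0 := by
        have heq : (A n \ A0) ×ˢ (B n \ B0) = (A n ×ˢ B n) \ C := by
          ext ⟨x, y⟩
          simp only [hC, mem_prod, mem_diff, mem_union, mem_univ, and_true, true_and]
          tauto
        rw [heq]
        exact measure_mono_null hsub h0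
      rw [Measure.prod_prod] at h1
      exact mul_eq_zero.1 h1
    set A' := A0 ∪ (X'ᶜ ∪ ⋃ n, if μ (A n \ A0) = 0 then A n \ A0 else ∅) with hA'def
    set B' := B0 ∪ (Y'ᶜ ∪ ⋃ n, if μ (A n \ A0) = 0 then ∅ else B n \ B0) with hB'def
    have hA' : MeasurableSet A' := by
      refine hA0.union ((hX'.compl).union (MeasurableSet.iUnion fun n => ?_))
      split <;> [exact (hA n).diff hA0; exact MeasurableSet.empty]
    have hB' : MeasurableSet B' := by
      refine hB0.union ((hY'.compl).union (MeasurableSet.iUnion fun n => ?_))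
      split <;> [exact MeasurableSet.empty; exact (hB n).diff hB0]
    have hμX'c : μ X'ᶜ = 0 := by
      rw [measure_compl hX' (measure_ne_top μ X'), hμX', measure_univ, tsub_self]
    have hνY'c : ν Y'ᶜ = 0 := by
      rw [measure_compl hY' (measure_ne_top ν Y'), hνY', measure_univ, tsub_self]
    have hμA' : μ A' = μ A0 := by
      rw [hA'def]
      have hN : μ (X'ᶜ ∪ ⋃ n, if μ (A n \ A0) = 0 then A n \ A0 else ∅) = 0 := by
        refine measure_union_null hμX'c (measure_iUnion_null fun n => ?_)
        split
        · assumption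
        · exact measure_empty
      exact le_antisymm ((measure_union_le _ _).trans_eq (by rw [hN, add_zero]))
        (measure_mono subset_union_left)
    have hνB' : ν B' = ν B0 := by
      rw [hB'def]
      have hN : ν (Y'ᶜ ∪ ⋃ n, if μ (A n \ A0) = 0 then ∅ else B n \ B0) = 0 := by
        refine measure_union_null hνY'c (measure_iUnion_null fun n => ?_)
        split
        · exact measure_empty
        · rcases key n with h | h
          · exact absurd h (by assumption)
          · exact h
      exact le_antisymm ((measure_union_le _ _).trans_eq (by rw [hN, add_zero]))
        (measure_mono subset_union_left)
    have hcov : Z ⊆ (A' ×ˢ (univ : Set Y)) ∪ ((univ : Set X) ×ˢ B') := by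
      rintro ⟨x, y⟩ hz
      by_cases hx' : x ∈ X'
      swap
      · exact Or.inl ⟨Or.inr (Or.inl hx'), mem_univ _⟩
      by_cases hy' : y ∈ Y'
      swap
      · exact Or.inr ⟨mem_univ _, Or.inr (Or.inl hy')⟩
      have hmem : (x, y) ∈ ⋃ n, (A n) ×ˢ (B n) := by
        rw [← hZeq]; exact ⟨hz, hx', hy'⟩
      obtain ⟨n, hxn, hyn⟩ := mem_iUnion.1 hmem
      by_cases hxA : x ∈ A0
      · exact Or.inl ⟨Or.inl hxA, mem_univ _⟩
      by_cases hyB : y ∈ B0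
      · exact Or.inr ⟨mem_univ _, Or.inl hyB⟩
      by_cases hn : μ (A n \ A0) = 0
      · refine Or.inl ⟨Or.inr (Or.inr (mem_iUnion.2 ⟨n, ?_⟩)), mem_univ _⟩
        simp only [if_pos hn]
        exact ⟨hxn, hxA⟩
      · refine Or.inr ⟨mem_univ _, Or.inr (Or.inr (mem_iUnion.2 ⟨n, ?_⟩))⟩
        simp only [if_neg hn]
        exact ⟨hyn, hyB⟩
    refine iInf_le_of_le A' (iInf_le_of_le B' (iInf_le_of_le hA' (iInf_le_of_le hB'
      (iInf_le_of_le hcov ?_))))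
    rw [hμA', hνB']

end VirtCont
end
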